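/- arXiv:2202.11267 — 10 statements merged into one kernel-verified Lean document; each statement's English description precedes it below -/
import Mathlib

section
/- The cycle on 5 vertices has no odd 4-coloring; that is, every proper 4-coloring of C_5 fails the condition that each vertex has some color appearing an odd number of times among its neighbors. Equivalently, the odd chromatic number of C_5 equals 5. -/
/-- A proper `c`-coloring in which every vertex with a neighbor has some color
appearing an odd number of times on its neighborhood. -/
def IsOddColoring {V : Type*} {c : ℕ} (G : SimpleGraph V) (φ : V → Fin c) : Prop :=
  (∀ ⦃u v⦄, G.Adj u v → φ u ≠ φ v) ∧
  ∀ v : V, (G.neighborSet v).Nonempty →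
    ∃ k : Fin c, Odd {u | G.Adj v u ∧ φ u = k}.ncard

/-- `G` has an odd `c`-coloring. -/
def HasOddColoring {V : Type*} (G : SimpleGraph V) (c : ℕ) : Prop :=
  ∃ φ : V → Fin c, IsOddColoring G φ

/-- `mad(G) ≤ r`: every non-empty subgraph has average degree at most `r`. -/
def MadLE {V : Type*} (G : SimpleGraph V) (r : ℚ) : Prop :=
  ∀ H : G.Subgraph, H.verts.Nonempty →
    (2 * H.edgeSet.ncard : ℚ) ≤ r * H.verts.ncard

/-- `mad(G) < r`: every non-empty subgraph has average degree less than `r`. -/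
def MadLT {V : Type*} (G : SimpleGraph V) (r : ℚ) : Prop :=
  ∀ H : G.Subgraph, H.verts.Nonempty →
    (2 * H.edgeSet.ncard : ℚ) < r * H.verts.ncard


lemma adj5 (v u : Fin 5) : (SimpleGraph.cycleGraph 5).Adj v u ↔ u = v - 1 ∨ u = v + 1 := by
  have h := SimpleGraph.cycleGraph_neighborSet (n := 3) (v := v)
  rw [← SimpleGraph.mem_neighborSet, h]; simp

lemma ne5 (v : Fin 5) : v - 1 ≠ v + 1 := by
  intro h
  have h' : (v - 1) - v = (v + 1) - v := by rw [h]
  simp only [sub_sub_cancel_left, add_sub_cancel_left] at h'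
  exact absurd h' (by decide)

/-- The 5-cycle has no odd 4-coloring, and it has an odd 5-coloring;
hence its odd chromatic number is 5. -/
theorem stmt_0 :
    ¬ HasOddColoring (SimpleGraph.cycleGraph 5) 4 ∧
      HasOddColoring (SimpleGraph.cycleGraph 5) 5 := by
  constructor
  · rintro ⟨φ, h1, h2⟩
    have key : ∀ v : Fin 5, φ (v - 1) ≠ φ (v + 1) := by
      intro v heq
      obtain ⟨k, hk⟩ := h2 v ⟨v + 1, (adj5 v (v + 1)).mpr (Or.inr rfl)⟩
      by_cases hc : φ (v + 1) = k
      · have hset : {u | (SimpleGraph.cycleGraph 5).Adj v u ∧ φ u = k} = {v - 1, v + 1} := by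
          ext u
          simp only [Set.mem_setOf_eq, adj5, Set.mem_insert_iff, Set.mem_singleton_iff]
          constructor
          · rintro ⟨h, _⟩; exact h
          · rintro (rfl | rfl)
            · exact ⟨Or.inl rfl, heq.trans hc⟩
            · exact ⟨Or.inr rfl, hc⟩
        rw [hset, Set.ncard_pair (ne5 v)] at hk
        exact absurd hk (by decide)
      · have hset : {u | (SimpleGraph.cycleGraph 5).Adj v u ∧ φ u = k} = ∅ := by
          ext u
          simp only [Set.mem_setOf_eq, adj5, Set.mem_empty_iff_false, iff_false, not_and]
          rintro (rfl | rfl)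
          · rw [heq]; exact hc
          · exact hc
        rw [hset, Set.ncard_empty] at hk
        exact absurd hk (by decide)
    have a1 : ∀ u : Fin 5, φ u ≠ φ (u + 1) :=
      fun u => h1 ((adj5 u (u + 1)).mpr (Or.inr rfl))
    have a2 : ∀ u : Fin 5, φ u ≠ φ (u + 2) := by
      intro u
      have := key (u + 1)
      have e1 : u + 1 - 1 = u := by clear this; revert u; decide
      have e2 : u + 1 + 1 = u + 2 := by clear this e1; revert u; decide
      rwa [e1, e2] at this
    obtain ⟨i, j, hij, hfeq⟩ :=
      Fintype.exists_ne_map_eq_of_card_lt φ (by simp)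
    have b1 := a1 0; have b2 := a1 1; have b3 := a1 2; have b4 := a1 3; have b5 := a1 4
    have c1 := a2 0; have c2 := a2 1; have c3 := a2 2; have c4 := a2 3; have c5 := a2 4
    fin_cases i <;> fin_cases j <;> simp_all
  · refine ⟨fun v => v, fun u v huv => huv.ne, fun v _ => ⟨v + 1, ?_⟩⟩
    have hset : {u | (SimpleGraph.cycleGraph 5).Adj v u ∧ u = v + 1} = {v + 1} := by
      ext u
      simp only [Set.mem_setOf_eq, adj5, Set.mem_singleton_iff]
      constructor
      · rintro ⟨_, h⟩; exact h
      · rintro rfl; exact ⟨Or.inr rfl, rfl⟩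
    rw [hset, Set.ncard_singleton]
    exact odd_one
end

section
/- For every cycle C_ℓ with ℓ not divisible by 3 and ℓ ≥ 4, C_ℓ has no odd 3-coloring. -/
open SimpleGraph
open Fin.NatCast

private lemma zmod3_step : ∀ a b c : ZMod 3, a ≠ b → b ≠ c → a ≠ c → b - a = c - b := by
  decide

private lemma fin3_cast_inj : Function.Injective (fun x : Fin 3 => ((x : ℕ) : ZMod 3)) := by
  intro a b h
  have := congrArg ZMod.val h
  rwa [ZMod.val_natCast_of_lt a.isLt, ZMod.val_natCast_of_lt b.isLt, Fin.val_inj] at this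

/-- For every `ℓ ≥ 4` with `3 ∤ ℓ`, the cycle `C_ℓ` has no odd 3-coloring. -/
theorem stmt_1 (ℓ : ℕ) (hℓ : 4 ≤ ℓ) (hdvd : ¬ 3 ∣ ℓ) :
    ¬ HasOddColoring (SimpleGraph.cycleGraph ℓ) 3 := by
  obtain ⟨m, rfl⟩ : ∃ m, ℓ = m + 2 + 2 := ⟨ℓ - 4, by omega⟩
  rintro ⟨φ, hproper, hodd⟩
  have hsub_ne : ∀ v : Fin (m + 2 + 2), v - 1 ≠ v + 1 := by
    intro v h
    have h2 : (1 : Fin (m + 2 + 2)) + 1 = 0 := by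
      have h' : v + 0 = v + (1 + 1) := by
        rw [add_zero, ← add_assoc]
        exact sub_eq_iff_eq_add.mp h
      exact (add_left_cancel h').symm
    have := congrArg Fin.val h2
    simp [Fin.val_add, Fin.val_one, Nat.mod_eq_of_lt] at this
  have hadjp : ∀ v : Fin (m + 2 + 2), (cycleGraph (m + 2 + 2)).Adj v (v + 1) := by
    intro v; rw [SimpleGraph.cycleGraph_adj]; right; simp
  -- At each vertex, the two neighbours get distinct colors.
  have hnbr : ∀ v : Fin (m + 2 + 2), φ (v - 1) ≠ φ (v + 1) := by
    intro v heq
    obtain ⟨k, hk⟩ := hodd v ⟨v + 1, hadjp v⟩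
    have hmem : ∀ u : Fin (m + 2 + 2),
        (cycleGraph (m + 2 + 2)).Adj v u ↔ u = v - 1 ∨ u = v + 1 := by
      intro u
      rw [SimpleGraph.cycleGraph_adj]
      constructor
      · rintro (h | h)
        · left; rw [sub_eq_iff_eq_add'.mp h]; rw [add_sub_cancel_right]
        · right; rw [sub_eq_iff_eq_add'.mp h]
      · rintro (rfl | rfl)
        · left; simp
        · right; simp
    have hset : {u | (cycleGraph (m + 2 + 2)).Adj v u ∧ φ u = k} =
        if φ (v + 1) = k then {v - 1, v + 1} else ∅ := by
      ext u
      simp only [Set.mem_setOf_eq, hmem]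
      split_ifs with hc
      · simp only [Set.mem_insert_iff, Set.mem_singleton_iff]
        constructor
        · exact fun h => h.1
        · rintro (rfl | rfl)
          · exact ⟨Or.inl rfl, heq.trans hc⟩
          · exact ⟨Or.inr rfl, hc⟩
      · simp only [Set.mem_empty_iff_false, iff_false]
        rintro ⟨rfl | rfl, h2⟩
        · exact hc (heq ▸ h2)
        · exact hc h2
    rw [hset] at hk
    split_ifs at hk with hc
    · rw [Set.ncard_pair (hsub_ne v)] at hk
      exact (Nat.not_odd_iff_even.mpr (by decide)) hk
    · simp at hk
  -- Work in `ZMod 3`.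
  set ψ : Fin (m + 2 + 2) → ZMod 3 := fun v => ((φ v : ℕ) : ZMod 3) with hψ
  have hψ_ne : ∀ {a b : Fin (m + 2 + 2)}, φ a ≠ φ b → ψ a ≠ ψ b := by
    intro a b h hab
    exact h (fin3_cast_inj hab)
  -- the difference along the cycle is constant
  set d : ZMod 3 := ψ (0 + 1) - ψ 0 with hd
  have hstep : ∀ v : Fin (m + 2 + 2), ψ (v + 1) - ψ v = d := by
    have key : ∀ v : Fin (m + 2 + 2), ψ (v + 1) - ψ v = ψ (v + 1 + 1) - ψ (v + 1) := by
      intro v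
      have h1 : ψ v ≠ ψ (v + 1) := hψ_ne (hproper (hadjp v))
      have h2 : ψ (v + 1) ≠ ψ (v + 1 + 1) := hψ_ne (hproper (hadjp (v + 1)))
      have h3 : ψ v ≠ ψ (v + 1 + 1) := by
        have := hnbr (v + 1)
        rw [add_sub_cancel_right] at this
        exact hψ_ne this
      exact zmod3_step _ _ _ h1 h2 h3
    have hcast : ∀ N : ℕ, ψ ((N : Fin (m + 2 + 2)) + 1) - ψ (N : Fin (m + 2 + 2)) = d := by
      intro N
      induction N with
      | zero => simp [hd]
      | succ k ih =>
        have hc : ((k + 1 : ℕ) : Fin (m + 2 + 2)) = (k : Fin (m + 2 + 2)) + 1 := by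
          push_cast; ring
        rw [hc, ← key]
        exact ih
    intro v
    have hv : v = ((v.val : ℕ) : Fin (m + 2 + 2)) := by simp
    rw [hv]
    exact hcast v.val
  -- iterate around the cycle
  have hiter : ∀ N : ℕ, ψ (N : Fin (m + 2 + 2)) = ψ 0 + (N : ZMod 3) * d := by
    intro N
    induction N with
    | zero => simp
    | succ k ih =>
      have hc : ((k + 1 : ℕ) : Fin (m + 2 + 2)) = (k : Fin (m + 2 + 2)) + 1 := by
        push_cast; ring
      have hs := hstep (k : Fin (m + 2 + 2))
      rw [sub_eq_iff_eq_add] at hs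
      rw [hc, hs, ih]
      push_cast
      ring
  have hfull := hiter (m + 2 + 2)
  rw [show ((m + 2 + 2 : ℕ) : Fin (m + 2 + 2)) = 0 from Fin.natCast_self _] at hfull
  have hnd : ((m + 2 + 2 : ℕ) : ZMod 3) * d = 0 := by linear_combination -hfull
  have hd0 : d ≠ 0 := by
    rw [hd, sub_ne_zero]
    exact (hψ_ne (hproper (hadjp 0))).symm
  have hz : ((m + 2 + 2 : ℕ) : ZMod 3) = 0 := by
    rcases mul_eq_zero.mp hnd with h | h
    · exact h
    · exact absurd h hd0
  exact hdvd ((ZMod.natCast_eq_zero_iff (m + 2 + 2) 3).mp hz)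
end

section
/- Let H_k be the graph obtained from k pairwise disjoint 5-cycles by choosing one vertex from each and identifying these k chosen vertices into a single vertex v. Then H_k has no odd 4-coloring. -/
/-- `Hgraph k`: `k` disjoint 5-cycles with one chosen vertex from each identified into
a single vertex `none`. The `i`-th 5-cycle is `none, (i,0), (i,1), (i,2), (i,3)`. -/
def Hgraph (k : ℕ) : SimpleGraph (Option (Fin k × Fin 4)) :=
  SimpleGraph.fromRel (fun a b =>
    (∃ i : Fin k, a = none ∧ b = some (i, 0)) ∨
    (∃ i : Fin k, a = none ∧ b = some (i, 3)) ∨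
    (∃ (i : Fin k) (j₁ j₂ : Fin 4), a = some (i, j₁) ∧ b = some (i, j₂) ∧
      (j₂ : ℕ) = (j₁ : ℕ) + 1))

lemma aux_adj_some (k : ℕ) (i : Fin k) (j : Fin 4) (u : Option (Fin k × Fin 4)) :
    (Hgraph k).Adj (some (i,j)) u ↔
      ((j.val = 0 ∨ j.val = 3) ∧ u = none) ∨
      (∃ j' : Fin 4, u = some (i, j') ∧ (j'.val = j.val + 1 ∨ j.val = j'.val + 1)) := by
  simp only [Hgraph, SimpleGraph.fromRel_adj]
  constructor
  · rintro ⟨hne, (⟨a,h,_⟩|⟨a,h,_⟩|⟨a,j1,j2,h1,h2,h3⟩)|(⟨a,rfl,h⟩|⟨a,rfl,h⟩|⟨a,j1,j2,h1,h2,h3⟩)⟩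
    · exact absurd h (by simp)
    · exact absurd h (by simp)
    · obtain ⟨rfl, rfl⟩ : a = i ∧ j1 = j := by simpa [Prod.ext_iff, eq_comm] using h1
      exact Or.inr ⟨j2, h2, Or.inl h3⟩
    · obtain ⟨rfl, h0⟩ : a = i ∧ (0 : Fin 4) = j := by simpa [Prod.ext_iff] using h.symm
      exact Or.inl ⟨Or.inl (by rw [← h0]; rfl), rfl⟩
    · obtain ⟨rfl, h0⟩ : a = i ∧ (3 : Fin 4) = j := by simpa [Prod.ext_iff] using h.symm
      exact Or.inl ⟨Or.inr (by rw [← h0]; rfl), rfl⟩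
    · obtain ⟨rfl, rfl⟩ : a = i ∧ j2 = j := by simpa [Prod.ext_iff, eq_comm] using h2
      exact Or.inr ⟨j1, h1, Or.inr h3⟩
  · rintro (⟨hj, rfl⟩ | ⟨j', rfl, hj⟩)
    · refine ⟨by simp, Or.inr ?_⟩
      rcases hj with h0 | h3
      · exact Or.inl ⟨i, rfl, by rw [show j = 0 from Fin.ext h0]⟩
      · exact Or.inr (Or.inl ⟨i, rfl, by rw [show j = 3 from Fin.ext h3]⟩)
    · refine ⟨by simp [Prod.ext_iff, Fin.ext_iff]; omega, ?_⟩
      rcases hj with h | h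
      · exact Or.inl (Or.inr (Or.inr ⟨i, j, j', rfl, rfl, h⟩))
      · exact Or.inr (Or.inr (Or.inr ⟨i, j', j, rfl, rfl, h⟩))

lemma aux_adj_none (k : ℕ) (u : Option (Fin k × Fin 4)) :
    (Hgraph k).Adj none u ↔ ∃ i : Fin k, u = some (i, 0) ∨ u = some (i, 3) := by
  simp only [Hgraph, SimpleGraph.fromRel_adj]
  constructor
  · rintro ⟨hne, (⟨a,_,rfl⟩|⟨a,_,rfl⟩|⟨a,j1,j2,h1,h2,h3⟩)|(⟨a,_,h⟩|⟨a,_,h⟩|⟨a,j1,j2,h1,h2,h3⟩)⟩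
    · exact ⟨a, Or.inl rfl⟩
    · exact ⟨a, Or.inr rfl⟩
    · exact absurd h1 (by simp)
    · exact absurd h (by simp)
    · exact absurd h (by simp)
    · exact absurd h2 (by simp)
  · rintro ⟨a, rfl | rfl⟩
    · exact ⟨by simp, Or.inl (Or.inl ⟨a, trivial, rfl⟩)⟩
    · exact ⟨by simp, Or.inl (Or.inr (Or.inl ⟨a, trivial, rfl⟩))⟩

-- vertex of degree 2 with neighbors x, y: odd condition forces φ x ≠ φ y
lemma aux_deg2 {V : Type*} {G : SimpleGraph V} {φ : V → Fin 4} {v x y : V} (hxy : x ≠ y)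
    (hchar : ∀ u, G.Adj v u ↔ u = x ∨ u = y)
    (ho : ∀ w, (G.neighborSet w).Nonempty → ∃ c : Fin 4, Odd {u | G.Adj w u ∧ φ u = c}.ncard) :
    φ x ≠ φ y := by
  intro heq
  obtain ⟨c, hc⟩ := ho v ⟨x, (hchar x).mpr (Or.inl rfl)⟩
  have hset : {u | G.Adj v u ∧ φ u = c} = {u | (u = x ∨ u = y) ∧ φ u = c} := by
    ext u; simp only [Set.mem_setOf_eq, hchar]
  rw [hset] at hc
  by_cases hcx : φ x = c
  · have he : {u | (u = x ∨ u = y) ∧ φ u = c} = {x, y} := by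
      ext u
      constructor
      · rintro ⟨(rfl|rfl), _⟩
        · exact Or.inl rfl
        · exact Or.inr rfl
      · rintro (rfl|rfl)
        · exact ⟨Or.inl rfl, hcx⟩
        · exact ⟨Or.inr rfl, heq.symm.trans hcx⟩
    rw [he, Set.ncard_pair hxy] at hc
    exact (by decide : ¬ Odd 2) hc
  · have he : {u | (u = x ∨ u = y) ∧ φ u = c} = ∅ := by
      ext u
      simp only [Set.mem_setOf_eq, Set.mem_empty_iff_false, iff_false, not_and]
      rintro (rfl|rfl)
      · exact hcx
      · exact fun h => hcx (heq.trans h)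
    rw [he] at hc
    simp at hc


/-- For `k ≥ 1`, the graph `H_k` has no odd 4-coloring. -/
theorem stmt_2 (k : ℕ) (hk : 1 ≤ k) : ¬ HasOddColoring (Hgraph k) 4 := by
  rintro ⟨φ, hp, ho⟩
  -- neighbor characterizations of cycle vertices
  have hA0 : ∀ i : Fin k, ∀ u, (Hgraph k).Adj (some (i,0)) u ↔ u = none ∨ u = some (i,1) := by
    intro i u
    rw [aux_adj_some]
    constructor
    · rintro (⟨_, rfl⟩ | ⟨j', rfl, h | h⟩)
      · exact Or.inl rfl
      · refine Or.inr ?_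
        have : j' = 1 := Fin.ext (by simpa using h)
        rw [this]
      · exact absurd h (by simp)
    · rintro (rfl | rfl)
      · exact Or.inl ⟨Or.inl rfl, rfl⟩
      · exact Or.inr ⟨1, rfl, Or.inl rfl⟩
  have hA1 : ∀ i : Fin k, ∀ u,
      (Hgraph k).Adj (some (i,1)) u ↔ u = some (i,0) ∨ u = some (i,2) := by
    intro i u
    rw [aux_adj_some]
    constructor
    · rintro (⟨h, rfl⟩ | ⟨j', rfl, h | h⟩)
      · simp at h
      · refine Or.inr ?_
        have : j' = 2 := Fin.ext (by simpa using h)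
        rw [this]
      · refine Or.inl ?_
        have : j' = 0 := Fin.ext (by simpa using h)
        rw [this]
    · rintro (rfl | rfl)
      · exact Or.inr ⟨0, rfl, Or.inr rfl⟩
      · exact Or.inr ⟨2, rfl, Or.inl rfl⟩
  have hA2 : ∀ i : Fin k, ∀ u,
      (Hgraph k).Adj (some (i,2)) u ↔ u = some (i,1) ∨ u = some (i,3) := by
    intro i u
    rw [aux_adj_some]
    constructor
    · rintro (⟨h, rfl⟩ | ⟨j', rfl, h | h⟩)
      · simp at h
      · refine Or.inr ?_
        have : j' = 3 := Fin.ext (by simpa using h)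
        rw [this]
      · refine Or.inl ?_
        have : j' = 1 := Fin.ext (by simpa using h)
        rw [this]
    · rintro (rfl | rfl)
      · exact Or.inr ⟨1, rfl, Or.inr rfl⟩
      · exact Or.inr ⟨3, rfl, Or.inl rfl⟩
  have hA3 : ∀ i : Fin k, ∀ u,
      (Hgraph k).Adj (some (i,3)) u ↔ u = some (i,2) ∨ u = none := by
    intro i u
    rw [aux_adj_some]
    constructor
    · rintro (⟨_, rfl⟩ | ⟨j', rfl, h | h⟩)
      · exact Or.inr rfl
      · refine absurd h ?_
        have hlt := j'.isLt
        simp only [show ((3:Fin 4):ℕ) = 3 from rfl]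
        omega
      · refine Or.inl ?_
        have : j' = 2 := Fin.ext (by
          simp only [show ((3:Fin 4):ℕ) = 3 from rfl, show ((2:Fin 4):ℕ) = 2 from rfl] at h ⊢
          omega)
        rw [this]
    · rintro (rfl | rfl)
      · exact Or.inr ⟨2, rfl, Or.inr rfl⟩
      · exact Or.inl ⟨Or.inr rfl, rfl⟩
  -- on each cycle, the two neighbors of `none` get the same color
  have key : ∀ i : Fin k, φ (some (i,0)) = φ (some (i,3)) := by
    intro i
    have d1 : φ none ≠ φ (some (i,1)) := aux_deg2 (by simp) (hA0 i) ho
    have d2 : φ (some (i,0)) ≠ φ (some (i,2)) := aux_deg2 (by simp) (hA1 i) ho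
    have d3 : φ (some (i,1)) ≠ φ (some (i,3)) := aux_deg2 (by simp) (hA2 i) ho
    have d4 : φ (some (i,2)) ≠ φ none := aux_deg2 (by simp) (hA3 i) ho
    have p0 : φ (some (i,0)) ≠ φ none := hp ((hA0 i none).mpr (Or.inl rfl))
    have p1 : φ (some (i,0)) ≠ φ (some (i,1)) := hp ((hA0 i _).mpr (Or.inr rfl))
    have p2 : φ (some (i,1)) ≠ φ (some (i,2)) := hp ((hA1 i _).mpr (Or.inr rfl))
    have p3 : φ (some (i,2)) ≠ φ (some (i,3)) := hp ((hA2 i _).mpr (Or.inr rfl))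
    have p4 : φ (some (i,3)) ≠ φ none := hp ((hA3 i none).mpr (Or.inr rfl))
    have ha := (φ none).isLt
    have h0 := (φ (some (i,0))).isLt
    have h1 := (φ (some (i,1))).isLt
    have h2 := (φ (some (i,2))).isLt
    have h3 := (φ (some (i,3))).isLt
    rw [Fin.ne_iff_vne] at d1 d2 d3 d4 p0 p1 p2 p3 p4
    exact Fin.ext (by omega)
  -- now the odd condition at `none` fails
  have i0 : Fin k := ⟨0, hk⟩
  obtain ⟨c, hc⟩ := ho none ⟨some (i0, 0), (aux_adj_none k _).mpr ⟨i0, Or.inl rfl⟩⟩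
  set T : Set (Fin k) := {i | φ (some (i, 0)) = c} with hT
  have hS : {u | (Hgraph k).Adj none u ∧ φ u = c} =
      (fun i => some (i, (0:Fin 4))) '' T ∪ (fun i => some (i, (3:Fin 4))) '' T := by
    ext u
    simp only [Set.mem_setOf_eq, aux_adj_none, Set.mem_union, Set.mem_image]
    constructor
    · rintro ⟨⟨i, rfl | rfl⟩, hu⟩
      · exact Or.inl ⟨i, hu, rfl⟩
      · exact Or.inr ⟨i, (key i).trans hu, rfl⟩
    · rintro (⟨i, hi, rfl⟩ | ⟨i, hi, rfl⟩)
      · exact ⟨⟨i, Or.inl rfl⟩, hi⟩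
      · exact ⟨⟨i, Or.inr rfl⟩, (key i).symm.trans hi⟩
  have hinj0 : Function.Injective (fun i : Fin k => (some (i, (0:Fin 4)) : Option (Fin k × Fin 4))) := by
    intro a b h; simpa using h
  have hinj3 : Function.Injective (fun i : Fin k => (some (i, (3:Fin 4)) : Option (Fin k × Fin 4))) := by
    intro a b h; simpa using h
  have hdisj : Disjoint ((fun i => some (i, (0:Fin 4))) '' T) ((fun i => some (i, (3:Fin 4))) '' T) := by
    rw [Set.disjoint_left]
    rintro u ⟨i, _, rfl⟩ ⟨i', _, h⟩
    simp [Prod.ext_iff] at h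
  have hcard : {u | (Hgraph k).Adj none u ∧ φ u = c}.ncard = 2 * T.ncard := by
    rw [hS, Set.ncard_union_eq hdisj (Set.toFinite _) (Set.toFinite _),
      Set.ncard_image_of_injective _ hinj0, Set.ncard_image_of_injective _ hinj3]
    ring
  rw [hcard] at hc
  exact (Nat.not_odd_iff_even.mpr ⟨T.ncard, by ring⟩) hc
end

section
/- Let H_k be the graph obtained from k disjoint 5-cycles by identifying one chosen vertex from each into a single vertex. Then the maximum average degree of H_k equals 10k/(4k+1). In particular, mad(H_k) ≤ 12/5 if and only if k ≤ 6. -/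
/-! Auxiliary machinery -/

def HgEp {k : ℕ} (i : Fin k) : Fin 5 → (Option (Fin k × Fin 4)) × (Option (Fin k × Fin 4)) :=
  ![(none, some (i,0)), (some (i,0), some (i,1)), (some (i,1), some (i,2)),
    (some (i,2), some (i,3)), (some (i,3), none)]

def HgIota {k : ℕ} (p : Fin k × Fin 5) : Sym2 (Option (Fin k × Fin 4)) :=
  Sym2.mk (HgEp p.1 p.2).1 (HgEp p.1 p.2).2

def HgRel (k : ℕ) (a b : Option (Fin k × Fin 4)) : Prop :=
  (∃ i : Fin k, a = none ∧ b = some (i, 0)) ∨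
  (∃ i : Fin k, a = none ∧ b = some (i, 3)) ∨
  (∃ (i : Fin k) (j₁ j₂ : Fin 4), a = some (i, j₁) ∧ b = some (i, j₂) ∧
    (j₂ : ℕ) = (j₁ : ℕ) + 1)

lemma Hg_succ4 : ∀ j₁ j₂ : Fin 4, (j₂ : ℕ) = (j₁ : ℕ) + 1 →
    (j₁ = 0 ∧ j₂ = 1) ∨ (j₁ = 1 ∧ j₂ = 2) ∨ (j₁ = 2 ∧ j₂ = 3) := by decide

lemma Hg_edge_mem_range {k : ℕ} {e : Sym2 (Option (Fin k × Fin 4))}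
    (he : e ∈ (Hgraph k).edgeSet) : e ∈ Set.range (HgIota (k := k)) := by
  induction e with
  | _ a b =>
    rw [SimpleGraph.mem_edgeSet, Hgraph, SimpleGraph.fromRel_adj] at he
    obtain ⟨hne, h | h⟩ := he
    · rcases h with ⟨i, rfl, rfl⟩ | ⟨i, rfl, rfl⟩ | ⟨i, j₁, j₂, rfl, rfl, hj⟩
      · exact ⟨(i, 0), rfl⟩
      · exact ⟨(i, 4), Sym2.eq_swap⟩
      · rcases Hg_succ4 j₁ j₂ hj with ⟨rfl, rfl⟩ | ⟨rfl, rfl⟩ | ⟨rfl, rfl⟩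
        · exact ⟨(i, 1), rfl⟩
        · exact ⟨(i, 2), rfl⟩
        · exact ⟨(i, 3), rfl⟩
    · rcases h with ⟨i, rfl, rfl⟩ | ⟨i, rfl, rfl⟩ | ⟨i, j₁, j₂, rfl, rfl, hj⟩
      · exact ⟨(i, 0), Sym2.eq_swap⟩
      · exact ⟨(i, 4), rfl⟩
      · rcases Hg_succ4 j₁ j₂ hj with ⟨rfl, rfl⟩ | ⟨rfl, rfl⟩ | ⟨rfl, rfl⟩
        · exact ⟨(i, 1), Sym2.eq_swap⟩
        · exact ⟨(i, 2), Sym2.eq_swap⟩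
        · exact ⟨(i, 3), Sym2.eq_swap⟩

lemma Hg_range_sub_edge {k : ℕ} (p : Fin k × Fin 5) : HgIota p ∈ (Hgraph k).edgeSet := by
  obtain ⟨i, j⟩ := p
  have key : ∀ a b : Option (Fin k × Fin 4), a ≠ b → (HgRel k a b ∨ HgRel k b a) →
      Sym2.mk a b ∈ (Hgraph k).edgeSet := by
    intro a b hne hr
    exact (SimpleGraph.mem_edgeSet (Hgraph k)).mpr
      ((SimpleGraph.fromRel_adj _ a b).2 ⟨hne, hr⟩)
  fin_cases j
  · exact key _ _ (by simp [HgEp]) (Or.inl (Or.inl ⟨i, rfl, rfl⟩))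
  · exact key _ _ (by simp [HgEp]) (Or.inl (Or.inr (Or.inr ⟨i, 0, 1, rfl, rfl, rfl⟩)))
  · exact key _ _ (by simp [HgEp]) (Or.inl (Or.inr (Or.inr ⟨i, 1, 2, rfl, rfl, rfl⟩)))
  · exact key _ _ (by simp [HgEp]) (Or.inl (Or.inr (Or.inr ⟨i, 2, 3, rfl, rfl, rfl⟩)))
  · exact key _ _ (by simp [HgEp]) (Or.inr (Or.inr (Or.inl ⟨i, rfl, rfl⟩)))

lemma Hg_iota_inj {k : ℕ} : Function.Injective (HgIota (k := k)) := by
  rintro ⟨i, j⟩ ⟨i', j'⟩ h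
  fin_cases j <;> fin_cases j' <;>
    simp_all [HgIota, HgEp, Sym2.eq_iff, Prod.ext_iff] <;> omega

lemma Hg_edgeSet_eq {k : ℕ} : (Hgraph k).edgeSet = Set.range (HgIota (k := k)) :=
  Set.Subset.antisymm (fun _ he => Hg_edge_mem_range he)
    (Set.range_subset_iff.2 Hg_range_sub_edge)

lemma Hg_edge_count {k : ℕ} : (Hgraph k).edgeSet.ncard = 5 * k := by
  rw [Hg_edgeSet_eq, ← Set.image_univ, Set.ncard_image_of_injective _ Hg_iota_inj,
    Set.ncard_univ]
  simp [Nat.card_eq_fintype_card, mul_comm]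

lemma Hg_vert_count {k : ℕ} :
    (Set.univ : Set (Option (Fin k × Fin 4))).ncard = 4 * k + 1 := by
  rw [Set.ncard_univ]
  simp [Nat.card_eq_fintype_card, Fintype.card_option, mul_comm]

section cnt
variable (ph p0 p1 p2 p3 : Prop) [Decidable ph] [Decidable p0] [Decidable p1]
  [Decidable p2] [Decidable p3]

def HgFc : ℕ := (if ph ∧ p0 then 1 else 0) + (if p0 ∧ p1 then 1 else 0) +
  (if p1 ∧ p2 then 1 else 0) + (if p2 ∧ p3 then 1 else 0) + (if p3 ∧ ph then 1 else 0)

def HgNc : ℕ := (if p0 then 1 else 0) + (if p1 then 1 else 0) +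
  (if p2 then 1 else 0) + (if p3 then 1 else 0)

lemma HgFc_facts :
    8 * HgFc ph p0 p1 p2 p3 ≤ 10 * HgNc p0 p1 p2 p3 ∧
    HgFc ph p0 p1 p2 p3 ≤ HgNc p0 p1 p2 p3 + 1 ∧
    (¬ ph → (HgFc ph p0 p1 p2 p3 = 0 ∨ HgFc ph p0 p1 p2 p3 + 1 ≤ HgNc p0 p1 p2 p3)) ∧
    HgNc p0 p1 p2 p3 ≤ 4 := by
  unfold HgFc HgNc
  by_cases ph <;> by_cases p0 <;> by_cases p1 <;> by_cases p2 <;> by_cases p3 <;>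
    simp_all
end cnt

/-- The key natural-number inequality for arbitrary subgraphs. -/
lemma Hg_key {k : ℕ} (hk : 1 ≤ k) (H : (Hgraph k).Subgraph) :
    (8 * k + 2) * H.edgeSet.ncard ≤ 10 * k * H.verts.ncard := by
  classical
  set S := H.verts with hS
  set F : Fin k → ℕ := fun i => HgFc (none ∈ S) (some (i,0) ∈ S) (some (i,1) ∈ S)
    (some (i,2) ∈ S) (some (i,3) ∈ S) with hF
  set N : Fin k → ℕ := fun i => HgNc (some (i,0) ∈ S) (some (i,1) ∈ S)
    (some (i,2) ∈ S) (some (i,3) ∈ S) with hN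
  set P : Fin k × Fin 5 → Prop :=
    fun p => (HgEp p.1 p.2).1 ∈ S ∧ (HgEp p.1 p.2).2 ∈ S with hP
  have hsub : H.edgeSet ⊆ HgIota '' {p | P p} := by
    intro e he
    obtain ⟨p, rfl⟩ := Hg_edge_mem_range (H.edgeSet_subset he)
    refine ⟨p, ?_, rfl⟩
    have hadj : H.Adj (HgEp p.1 p.2).1 (HgEp p.1 p.2).2 := by
      rw [← SimpleGraph.Subgraph.mem_edgeSet]; exact he
    exact ⟨hadj.fst_mem, hadj.snd_mem⟩
  have hecard : H.edgeSet.ncard ≤ ∑ i : Fin k, F i := by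
    have h1 : H.edgeSet.ncard ≤ (Finset.univ.filter P).card := by
      calc H.edgeSet.ncard ≤ (HgIota '' {p | P p}).ncard :=
            Set.ncard_le_ncard hsub (Set.toFinite _)
        _ ≤ {p | P p}.ncard := Set.ncard_image_le (Set.toFinite _)
        _ = (Finset.univ.filter P).card := by
            rw [← Set.ncard_coe_finset]; congr 1; ext p; simp [P]
    refine h1.trans (le_of_eq ?_)
    rw [Finset.card_filter, Fintype.sum_prod_type]
    refine Finset.sum_congr rfl fun i _ => ?_
    rw [Fin.sum_univ_five]
    rfl
  have hvcard : S.ncard = (if none ∈ S then 1 else 0) + ∑ i : Fin k, N i := by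
    have h1 : S.ncard = (Finset.univ.filter (· ∈ S)).card := by
      rw [← Set.ncard_coe_finset]; congr 1; ext v; simp
    rw [h1, Finset.card_filter]
    rw [Fintype.sum_option (fun v => if v ∈ S then 1 else 0), Fintype.sum_prod_type]
    congr 1
    refine Finset.sum_congr rfl fun i _ => ?_
    rw [Fin.sum_univ_four]
    rfl
  set Sf := ∑ i : Fin k, F i with hSf
  set Sn := ∑ i : Fin k, N i with hSn
  have m0 : (8 * k + 2) * H.edgeSet.ncard ≤ (8 * k + 2) * Sf :=
    Nat.mul_le_mul_left _ hecard
  by_cases hh : none ∈ S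
  · -- hub present
    have sA : 8 * Sf ≤ 10 * Sn := by
      rw [hSf, hSn, Finset.mul_sum, Finset.mul_sum]
      exact Finset.sum_le_sum fun i _ => (HgFc_facts _ _ _ _ _).1
    have sB : Sf ≤ Sn + k := by
      calc Sf ≤ ∑ i : Fin k, (N i + 1) :=
            Finset.sum_le_sum fun i _ => (HgFc_facts _ _ _ _ _).2.1
        _ = Sn + k := by
            rw [Finset.sum_add_distrib, Finset.sum_const, Finset.card_univ,
              Fintype.card_fin, smul_eq_mul, mul_one]
    have sC : Sn ≤ 4 * k := by
      calc Sn ≤ ∑ _i : Fin k, 4 :=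
            Finset.sum_le_sum fun i _ => (HgFc_facts (none ∈ S) _ _ _ _).2.2.2
        _ = 4 * k := by
            rw [Finset.sum_const, Finset.card_univ, Fintype.card_fin, smul_eq_mul,
              mul_comm]
    have m1 : k * (8 * Sf) ≤ k * (10 * Sn) := Nat.mul_le_mul_left k sA
    rw [hvcard, if_pos hh]
    nlinarith [m0, m1, sB, sC]
  · -- hub absent
    have sD : ∀ i : Fin k, (8 * k + 2) * F i ≤ 10 * k * N i := by
      intro i
      rcases ((HgFc_facts (none ∈ S) (some (i,0) ∈ S) (some (i,1) ∈ S) (some (i,2) ∈ S)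
        (some (i,3) ∈ S)).2.2.1 hh) with h0 | h1
      · rw [show F i = 0 from h0]; simp
      · calc (8 * k + 2) * F i ≤ (8 * k + 2) * N i :=
              Nat.mul_le_mul_left _ (le_trans (Nat.le_succ _) h1)
          _ ≤ 10 * k * N i := Nat.mul_le_mul_right _ (by omega)
    have sS : (8 * k + 2) * Sf ≤ 10 * k * Sn := by
      rw [hSf, hSn, Finset.mul_sum, Finset.mul_sum]
      exact Finset.sum_le_sum fun i _ => sD i
    rw [hvcard, if_neg hh, zero_add]
    exact le_trans m0 sS

lemma Hg_madle {k : ℕ} (hk : 1 ≤ k) : MadLE (Hgraph k) (10 * k / (4 * k + 1)) := by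
  intro H _
  have key := Hg_key hk H
  have hpos : (0:ℚ) < 4 * (k:ℚ) + 1 := by positivity
  rw [div_mul_eq_mul_div, le_div_iff₀ hpos]
  have key' : ((8 * k + 2) * H.edgeSet.ncard : ℚ) ≤ (10 * k * H.verts.ncard : ℚ) := by
    exact_mod_cast key
  push_cast at key' ⊢
  nlinarith [key']


/-- For `k ≥ 1`, `mad(H_k) = 10k/(4k+1)`: every non-empty subgraph has average degree
at most `10k/(4k+1)` and some non-empty subgraph attains it.  In particular,
`mad(H_k) ≤ 12/5` if and only if `k ≤ 6`. -/
theorem stmt_3 (k : ℕ) (hk : 1 ≤ k) :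
    (MadLE (Hgraph k) (10 * k / (4 * k + 1)) ∧
      ∃ H : (Hgraph k).Subgraph, H.verts.Nonempty ∧
        (2 * H.edgeSet.ncard : ℚ) = (10 * k / (4 * k + 1)) * H.verts.ncard) ∧
    (MadLE (Hgraph k) (12 / 5) ↔ k ≤ 6) := by
  have hpos : (0:ℚ) < 4 * (k:ℚ) + 1 := by positivity
  have etop : (⊤ : (Hgraph k).Subgraph).edgeSet.ncard = 5 * k := by
    rw [SimpleGraph.Subgraph.edgeSet_top]; exact Hg_edge_count
  have vtop : (⊤ : (Hgraph k).Subgraph).verts.ncard = 4 * k + 1 := by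
    rw [SimpleGraph.Subgraph.verts_top]; exact Hg_vert_count
  refine ⟨⟨Hg_madle hk, ⟨⊤, ⟨none, trivial⟩, ?_⟩⟩, ?_, ?_⟩
  · rw [etop, vtop]
    push_cast
    field_simp
    ring
  · intro hm
    have h1 := hm ⊤ ⟨none, trivial⟩
    rw [etop, vtop] at h1
    push_cast at h1
    have h2 : (k:ℚ) ≤ 6 := by linarith
    exact_mod_cast h2
  · intro hk6 H hne
    have h1 := Hg_madle hk H hne
    refine le_trans h1 (mul_le_mul_of_nonneg_right ?_ (by positivity))
    rw [div_le_div_iff₀ hpos (by norm_num)]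
    have h2 : (k:ℚ) ≤ 6 := by exact_mod_cast hk6
    linarith
end

section
/- Let K*_c be the graph obtained by subdividing every edge of the complete graph K_c exactly once. Then mad(K*_c) = (4c-4)/(c+1). -/
/-- `Kstar c`: the graph obtained from the complete graph `K_c` by subdividing every
edge exactly once.  Its vertices are the `c` branch vertices (`Sum.inl`) together with
one subdivision vertex (`Sum.inr`) for each pair of distinct branch vertices; a branch
vertex is adjacent exactly to the subdivision vertices of the pairs containing it. -/
def Kstar (c : ℕ) : SimpleGraph (Fin c ⊕ {e : Sym2 (Fin c) // ¬ e.IsDiag}) :=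
  SimpleGraph.fromRel (fun a b =>
    ∃ (i : Fin c) (e : {e : Sym2 (Fin c) // ¬ e.IsDiag}),
      a = Sum.inl i ∧ b = Sum.inr e ∧ i ∈ e.val)

lemma kstar_adj_inl_inr {c : ℕ} (i : Fin c) (e : {e : Sym2 (Fin c) // ¬ e.IsDiag}) :
    (Kstar c).Adj (Sum.inl i) (Sum.inr e) ↔ i ∈ e.val := by
  simp [Kstar, SimpleGraph.fromRel_adj]
  constructor
  · rintro ⟨a, ⟨h, rfl⟩, hm⟩; exact hm
  · exact fun hm => ⟨e.val, ⟨e.2, rfl⟩, hm⟩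

lemma kstar_adj_cases {c : ℕ} {a b : Fin c ⊕ {e : Sym2 (Fin c) // ¬ e.IsDiag}}
    (h : (Kstar c).Adj a b) :
    ∃ (i : Fin c) (e : {e : Sym2 (Fin c) // ¬ e.IsDiag}), i ∈ e.val ∧
      ((a = Sum.inl i ∧ b = Sum.inr e) ∨ (a = Sum.inr e ∧ b = Sum.inl i)) := by
  rw [Kstar, SimpleGraph.fromRel_adj] at h
  obtain ⟨-, h | h⟩ := h
  · obtain ⟨i, e, rfl, rfl, hm⟩ := h
    exact ⟨i, e, hm, Or.inl ⟨rfl, rfl⟩⟩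
  · obtain ⟨i, e, rfl, rfl, hm⟩ := h
    exact ⟨i, e, hm, Or.inr ⟨rfl, rfl⟩⟩

lemma fiber_two {c : ℕ} (e : {e : Sym2 (Fin c) // ¬ e.IsDiag}) :
    (Finset.univ.filter fun i : Fin c => i ∈ e.val).card = 2 := by
  obtain ⟨e, hd⟩ := e
  induction e using Sym2.ind with
  | _ a b =>
    have hab : a ≠ b := by simpa using hd
    have : (Finset.univ.filter fun i : Fin c => i ∈ s(a, b)) = {a, b} := by
      ext i; simp [Sym2.mem_iff]
    rw [this, Finset.card_insert_of_notMem (by simpa using hab), Finset.card_singleton]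

open Finset in
lemma edge_count {c : ℕ} (H : (Kstar c).Subgraph)
    [DecidablePred fun p : Fin c × {e : Sym2 (Fin c) // ¬ e.IsDiag} =>
      H.Adj (Sum.inl p.1) (Sum.inr p.2)] :
    H.edgeSet.ncard =
      (Finset.univ.filter fun p : Fin c × {e : Sym2 (Fin c) // ¬ e.IsDiag} =>
        H.Adj (Sum.inl p.1) (Sum.inr p.2)).card := by
  classical
  rw [Set.ncard_eq_toFinset_card']
  refine (Finset.card_bij (fun p _ => s(Sum.inl p.1, Sum.inr p.2)) ?_ ?_ ?_).symm
  · intro p hp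
    simp only [mem_filter] at hp
    simpa using hp.2
  · intro p hp q hq hpq
    rw [Sym2.eq_iff] at hpq
    rcases hpq with ⟨h1, h2⟩ | ⟨h1, h2⟩
    · exact Prod.ext (Sum.inl.inj h1) (Sum.inr.inj h2)
    · exact absurd h1 (by simp)
  · intro e he
    simp only [Set.mem_toFinset] at he
    induction e using Sym2.ind with
    | _ a b =>
      rw [SimpleGraph.Subgraph.mem_edgeSet] at he
      obtain ⟨i, f, hm, ⟨rfl, rfl⟩ | ⟨rfl, rfl⟩⟩ := kstar_adj_cases (H.adj_sub he)
      · exact ⟨(i, f), by simpa using he, rfl⟩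
      · exact ⟨(i, f), by simpa using he.symm, Sym2.eq_swap⟩

open Finset in
lemma vert_count {V W : Type*} [Fintype V] [Fintype W] (s : Set (V ⊕ W))
    [DecidablePred fun i : V => Sum.inl i ∈ s] [DecidablePred fun e : W => Sum.inr e ∈ s]
    [Fintype s] :
    s.ncard = (Finset.univ.filter fun i : V => Sum.inl i ∈ s).card
      + (Finset.univ.filter fun e : W => Sum.inr e ∈ s).card := by
  classical
  rw [Set.ncard_eq_toFinset_card']
  rw [← Finset.card_filter_add_card_filter_not (p := fun x => x.isLeft = true)
    (s := s.toFinset)]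
  congr 1
  · refine (Finset.card_bij (fun i _ => Sum.inl i) ?_ ?_ ?_).symm
    · intro i hi; simp only [mem_filter] at hi ⊢; simpa using hi.2
    · intro i _ j _ h; exact Sum.inl.inj h
    · rintro (i | w) hv
      · exact ⟨i, by simpa using hv, rfl⟩
      · simp at hv
  · refine (Finset.card_bij (fun w _ => Sum.inr w) ?_ ?_ ?_).symm
    · intro w hw; simp only [mem_filter] at hw ⊢; simpa using hw.2
    · intro i _ j _ h; exact Sum.inr.inj h
    · rintro (i | w) hv
      · simp at hv
      · exact ⟨w, by simpa using hv, rfl⟩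

open Finset in
lemma bound_S {c : ℕ} (H : (Kstar c).Subgraph)
    [DecidablePred fun p : Fin c × {e : Sym2 (Fin c) // ¬ e.IsDiag} =>
      H.Adj (Sum.inl p.1) (Sum.inr p.2)]
    [DecidablePred fun e : {e : Sym2 (Fin c) // ¬ e.IsDiag} => Sum.inr e ∈ H.verts] :
    (Finset.univ.filter fun p : Fin c × {e : Sym2 (Fin c) // ¬ e.IsDiag} =>
        H.Adj (Sum.inl p.1) (Sum.inr p.2)).card ≤
      2 * (Finset.univ.filter fun e : {e : Sym2 (Fin c) // ¬ e.IsDiag} =>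
        Sum.inr e ∈ H.verts).card := by
  classical
  refine Finset.card_le_mul_card_image_of_maps_to (f := Prod.snd) ?_ 2 ?_
  · intro p hp
    simp only [mem_filter, mem_univ, true_and] at hp ⊢
    exact H.edge_vert hp.symm
  · intro e _
    rw [← fiber_two e]
    refine Finset.card_le_card_of_injOn Prod.fst ?_ ?_
    · intro p hp
      simp only [Finset.mem_coe, mem_filter, mem_univ, true_and] at hp ⊢
      obtain ⟨hadj, rfl⟩ := hp
      exact (kstar_adj_inl_inr _ _).mp (H.adj_sub hadj)
    · intro p hp q hq h
      simp only [Finset.coe_filter, Set.mem_setOf_eq] at hp hq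
      exact Prod.ext h (hp.2.trans hq.2.symm)

open Finset in
lemma bound_B {c : ℕ} (H : (Kstar c).Subgraph)
    [DecidablePred fun p : Fin c × {e : Sym2 (Fin c) // ¬ e.IsDiag} =>
      H.Adj (Sum.inl p.1) (Sum.inr p.2)]
    [DecidablePred fun i : Fin c => Sum.inl i ∈ H.verts] :
    (Finset.univ.filter fun p : Fin c × {e : Sym2 (Fin c) // ¬ e.IsDiag} =>
        H.Adj (Sum.inl p.1) (Sum.inr p.2)).card ≤
      (c - 1) * (Finset.univ.filter fun i : Fin c => Sum.inl i ∈ H.verts).card := by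
  classical
  refine Finset.card_le_mul_card_image_of_maps_to (f := Prod.fst) ?_ (c - 1) ?_
  · intro p hp
    simp only [mem_filter, mem_univ, true_and] at hp ⊢
    exact H.edge_vert hp
  · intro i _
    have hsub : ∀ p : Fin c × {e : Sym2 (Fin c) // ¬ e.IsDiag},
        p ∈ (Finset.univ.filter fun p => H.Adj (Sum.inl p.1) (Sum.inr p.2)).filter
            (fun p => p.1 = i) → i ∈ p.2.val := by
      intro p hp
      simp only [mem_filter, mem_univ, true_and] at hp
      obtain ⟨hadj, rfl⟩ := hp
      exact (kstar_adj_inl_inr _ _).mp (H.adj_sub hadj)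
    calc _ ≤ (Finset.univ.erase i).card := by
              refine Finset.card_le_card_of_injOn
                (fun p => if h : i ∈ p.2.val then Sym2.Mem.other' h else i) ?_ ?_
              · intro p hp
                have hm := hsub p hp
                simp only [dif_pos hm]
                refine Finset.mem_erase.mpr ⟨?_, Finset.mem_univ _⟩
                rw [← Sym2.other_eq_other']
                exact Sym2.other_ne p.2.2 hm
              · intro p hp q hq h
                have hmp := hsub p hp
                have hmq := hsub q hq
                simp only [dif_pos hmp, dif_pos hmq] at h
                have hval : p.2.val = q.2.val := by
                  rw [← Sym2.other_spec' hmp, ← Sym2.other_spec' hmq, h]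
                simp only [mem_filter, mem_univ, true_and, Finset.mem_coe] at hp hq
                exact Prod.ext (hp.2.trans hq.2.symm) (Subtype.ext hval)
         _ = c - 1 := by simp

open Finset in
lemma top_count {c : ℕ}
    [DecidablePred fun p : Fin c × {e : Sym2 (Fin c) // ¬ e.IsDiag} =>
      ((⊤ : (Kstar c).Subgraph)).Adj (Sum.inl p.1) (Sum.inr p.2)] :
    (Finset.univ.filter fun p : Fin c × {e : Sym2 (Fin c) // ¬ e.IsDiag} =>
        ((⊤ : (Kstar c).Subgraph)).Adj (Sum.inl p.1) (Sum.inr p.2)).card =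
      2 * Fintype.card {e : Sym2 (Fin c) // ¬ e.IsDiag} := by
  classical
  have hP : (Finset.univ.filter fun p : Fin c × {e : Sym2 (Fin c) // ¬ e.IsDiag} =>
        ((⊤ : (Kstar c).Subgraph)).Adj (Sum.inl p.1) (Sum.inr p.2)) =
      Finset.univ.filter fun p => p.1 ∈ p.2.val := by
    ext p
    simp [SimpleGraph.Subgraph.top_adj, kstar_adj_inl_inr]
  rw [hP]
  rw [Finset.card_eq_sum_card_fiberwise (f := Prod.snd) (t := Finset.univ)
    (fun p _ => Finset.mem_univ _)]
  have hfib : ∀ e : {e : Sym2 (Fin c) // ¬ e.IsDiag},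
      ((Finset.univ.filter fun p : Fin c × {e : Sym2 (Fin c) // ¬ e.IsDiag} =>
        p.1 ∈ p.2.val).filter fun p => p.2 = e).card = 2 := by
    intro e
    rw [← fiber_two e]
    refine Finset.card_bij (fun p _ => p.1) ?_ ?_ ?_
    · intro p hp
      simp only [mem_filter, mem_univ, true_and] at hp ⊢
      obtain ⟨hm, rfl⟩ := hp; exact hm
    · intro p hp q hq h
      simp only [mem_filter, mem_univ, true_and] at hp hq
      exact Prod.ext h (hp.2.trans hq.2.symm)
    · intro j hj
      simp only [mem_filter, mem_univ, true_and] at hj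
      exact ⟨(j, e), by simp [hj], rfl⟩
  simp only [hfib]
  rw [Finset.sum_const, smul_eq_mul, mul_comm, Finset.card_univ]

/-- For `c ≥ 1`, `mad(K*_c) = (4c-4)/(c+1)`: every non-empty subgraph has average
degree at most `(4c-4)/(c+1)` and some non-empty subgraph attains it. -/
theorem stmt_4 (c : ℕ) (hc : 1 ≤ c) :
    MadLE (Kstar c) ((4 * c - 4) / (c + 1)) ∧
      ∃ H : (Kstar c).Subgraph, H.verts.Nonempty ∧
        (2 * H.edgeSet.ncard : ℚ) = ((4 * c - 4) / (c + 1)) * H.verts.ncard := by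
  classical
  obtain ⟨d, rfl⟩ : ∃ d, c = d + 1 := ⟨c - 1, by omega⟩
  constructor
  · intro H hne
    rw [edge_count H, vert_count H.verts]
    set m := (Finset.univ.filter fun p : Fin (d+1) × {e : Sym2 (Fin (d+1)) // ¬ e.IsDiag} =>
      H.Adj (Sum.inl p.1) (Sum.inr p.2)).card with hm
    set b := (Finset.univ.filter fun i : Fin (d+1) => Sum.inl i ∈ H.verts).card with hb
    set s := (Finset.univ.filter fun e : {e : Sym2 (Fin (d+1)) // ¬ e.IsDiag} =>
      Sum.inr e ∈ H.verts).card with hs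
    have h1 : m ≤ 2 * s := bound_S H
    have h2 : m ≤ d * b := by simpa using bound_B H
    have h1q : (m : ℚ) ≤ 2 * s := by exact_mod_cast h1
    have h2q : (m : ℚ) ≤ d * b := by exact_mod_cast h2
    rw [div_mul_eq_mul_div, le_div_iff₀ (by positivity)]
    push_cast
    nlinarith [mul_le_mul_of_nonneg_left h1q (show (0:ℚ) ≤ (d:ℚ) by positivity),
      sq_nonneg ((d:ℚ))]
  · refine ⟨⊤, ⟨Sum.inl ⟨0, hc⟩, by simp⟩, ?_⟩
    rw [edge_count ⊤, top_count]
    have hverts : (⊤ : (Kstar (d+1)).Subgraph).verts = Set.univ := rfl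
    rw [hverts, Set.ncard_univ, Nat.card_eq_fintype_card, Fintype.card_sum, Fintype.card_fin]
    set N := Fintype.card {e : Sym2 (Fin (d+1)) // ¬ e.IsDiag} with hN
    have h2N : 2 * N = (d + 1) * d := by
      have hdvd : 2 ∣ (d + 1) * d := by
        rcases Nat.even_mul_succ_self d with ⟨k, hk⟩; exact ⟨k, by rw [Nat.mul_comm]; omega⟩
      rw [hN, Sym2.card_subtype_not_diag, Fintype.card_fin, Nat.choose_two_right]
      simp only [Nat.add_sub_cancel]
      exact Nat.mul_div_cancel' hdvd
    have h2Nq : (2 * N : ℚ) = (d + 1) * d := by exact_mod_cast h2N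
    rw [div_mul_eq_mul_div, eq_div_iff (by positivity)]
    push_cast at h2Nq ⊢
    linear_combination 4 * h2Nq
end

section
/- Let K*_c be the graph obtained by subdividing every edge of K_c exactly once, with c ≥ 3. Then K*_c has an odd c-coloring but no odd (c-1)-coloring; that is, χ_o(K*_c) = c. -/
namespace KstarAux

variable {c : ℕ}

open scoped Fin.NatCast Fin.CommRing

lemma sym2_rep {α : Type*} (z : Sym2 α) : ∃ a b, z = s(a, b) := by
  induction z using Sym2.ind with | _ a b => exact ⟨a, b, rfl⟩

lemma kstar_adj_inl (i : Fin c) (u : Fin c ⊕ {e : Sym2 (Fin c) // ¬ e.IsDiag}) :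
    (Kstar c).Adj (Sum.inl i) u ↔ ∃ e, u = Sum.inr e ∧ i ∈ e.val := by
  rw [Kstar, SimpleGraph.fromRel_adj]
  constructor
  · rintro ⟨hne, ⟨i', e', hi, rfl, hm⟩ | ⟨i', e', hi, he, hm⟩⟩
    · obtain rfl := Sum.inl.inj hi
      exact ⟨e', rfl, hm⟩
    · exact absurd he (by simp)
  · rintro ⟨e, rfl, hm⟩
    exact ⟨by simp, Or.inl ⟨i, e, rfl, rfl, hm⟩⟩

lemma kstar_adj_inr (e : {e : Sym2 (Fin c) // ¬ e.IsDiag})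
    (u : Fin c ⊕ {e : Sym2 (Fin c) // ¬ e.IsDiag}) :
    (Kstar c).Adj (Sum.inr e) u ↔ ∃ i, u = Sum.inl i ∧ i ∈ e.val := by
  rw [Kstar, SimpleGraph.fromRel_adj]
  constructor
  · rintro ⟨hne, ⟨i', e', hi, he, hm⟩ | ⟨i', e', rfl, he, hm⟩⟩
    · exact absurd hi (by simp)
    · obtain rfl := Sum.inr.inj he
      exact ⟨i', rfl, hm⟩
  · rintro ⟨i, rfl, hm⟩
    exact ⟨by simp, Or.inr ⟨i, e, rfl, rfl, hm⟩⟩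

lemma exists_odd_fiber {α β : Type*} [DecidableEq α] [Fintype β] [DecidableEq β]
    (s : Finset α) (f : α → β) (hs : Odd s.card) :
    ∃ k, Odd (s.filter (fun a => f a = k)).card := by
  by_contra h
  push_neg at h
  simp only [Nat.not_odd_iff_even] at h
  have := Finset.card_eq_sum_card_fiberwise (f := f) (s := s) (t := Finset.univ)
    (fun x _ => Finset.mem_univ _)
  rw [this] at hs
  exact (Nat.not_odd_iff_even.2 (Finset.even_sum _ (fun k _ => h k))) hs

lemma degcount (c : ℕ) (i : Fin c) :
    (Finset.univ.filter (fun e : {e : Sym2 (Fin c) // ¬ e.IsDiag} => i ∈ e.val)).card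
      = c - 1 := by
  classical
  rw [show c - 1 = (Finset.univ.erase i).card by
    rw [Finset.card_erase_of_mem (Finset.mem_univ i)]; simp]
  have hdiag : ∀ j ∈ Finset.univ.erase i, ¬ (s(i,j)).IsDiag := by
    intro j hj hd
    rw [Sym2.mk_isDiag_iff] at hd
    exact (Finset.mem_erase.1 hj).1 hd.symm
  refine Finset.card_bij' (fun e he => (Sym2.Mem.other (by simpa using he : i ∈ e.val)))
    (fun j hj => ⟨s(i, j), hdiag j hj⟩) ?hi ?hj ?li ?ri
  case hi =>
    intro e he
    exact Finset.mem_erase.2 ⟨Sym2.other_ne e.2 _, Finset.mem_univ _⟩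
  case hj =>
    intro j hj
    simp
  case li =>
    intro e he
    exact Subtype.ext (Sym2.other_spec _)
  case ri =>
    intro j hj
    exact Sym2.congr_right.1 (Sym2.other_spec _)

lemma half_exists (n : ℕ) (hodd : Odd (n+1)) : ∃ t : Fin (n+1), 2 * t = 1 := by
  obtain ⟨m, hm⟩ := hodd
  refine ⟨((m+1 : ℕ) : Fin (n+1)), ?_⟩
  have h1 : ((n+1 : ℕ) : Fin (n+1)) = 0 := by simp
  calc (2 : Fin (n+1)) * ((m+1:ℕ):Fin (n+1))
      = ((2*(m+1) : ℕ) : Fin (n+1)) := by push_cast; ring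
    _ = (((n+1) + 1 : ℕ) : Fin (n+1)) := by congr 1; omega
    _ = ((n+1 : ℕ) : Fin (n+1)) + 1 := by push_cast; ring
    _ = 1 := by rw [h1, zero_add]

lemma half_cancel (n : ℕ) (t : Fin (n+1)) (h2 : 2 * t = 1) {x y : Fin (n+1)}
    (h : x * t = y * t) : x = y := by
  have h3 : x * (2 * t) = y * (2 * t) := by linear_combination 2 * h
  rw [h2, mul_one, mul_one] at h3
  exact h3

/-- Main construction lemma: any assignment `g` of colors to subdivision vertices that
avoids the endpoints, and such that each branch vertex sees some color an odd number
of times, gives an odd coloring. -/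
lemma isOdd_of_g (n : ℕ) (hn : 2 ≤ n) (g : {e : Sym2 (Fin (n+1)) // ¬ e.IsDiag} → Fin (n+1))
    (hg : ∀ e, g e ∉ e.val)
    (hodd : ∀ i : Fin (n+1), ∃ k, Odd {e : {e : Sym2 (Fin (n+1)) // ¬ e.IsDiag} |
        i ∈ e.val ∧ g e = k}.ncard) :
    IsOddColoring (Kstar (n+1)) (Sum.elim id g) := by
  constructor
  · rintro (i | e) (j | f) hadj
    · obtain ⟨e, he, -⟩ := (kstar_adj_inl _ _).1 hadj
      exact absurd he (by simp)
    · obtain ⟨e, he, hm⟩ := (kstar_adj_inl _ _).1 hadj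
      obtain rfl := Sum.inr.inj he
      simp only [Sum.elim_inl, Sum.elim_inr, id]
      exact fun h => hg _ (h ▸ hm)
    · obtain ⟨i', he, hm⟩ := (kstar_adj_inr _ _).1 hadj
      obtain rfl := Sum.inl.inj he
      simp only [Sum.elim_inl, Sum.elim_inr, id]
      exact fun h => hg _ (h.symm ▸ hm)
    · obtain ⟨i', he, -⟩ := (kstar_adj_inr _ _).1 hadj
      exact absurd he (by simp)
  · rintro (i | e) -
    · -- branch vertex i
      obtain ⟨k, hk⟩ := hodd i
      refine ⟨k, ?_⟩
      have hset : {u | (Kstar (n+1)).Adj (Sum.inl i) u ∧ Sum.elim id g u = k}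
          = Sum.inr '' {e | i ∈ e.val ∧ g e = k} := by
        ext u
        simp only [Set.mem_setOf_eq, Set.mem_image, kstar_adj_inl]
        constructor
        · rintro ⟨⟨e, rfl, hm⟩, hcol⟩
          exact ⟨e, ⟨hm, by simpa using hcol⟩, rfl⟩
        · rintro ⟨e, ⟨hm, hcol⟩, rfl⟩
          exact ⟨⟨e, rfl, hm⟩, by simpa using hcol⟩
      rw [hset, Set.ncard_image_of_injective _ Sum.inr_injective]
      exact hk
    · -- subdivision vertex e
      obtain ⟨a, b, hab⟩ := sym2_rep e.val
      have ha : a ∈ e.val := by rw [hab]; simp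
      refine ⟨a, ?_⟩
      have hset : {u | (Kstar (n+1)).Adj (Sum.inr e) u ∧ Sum.elim id g u = a}
          = {Sum.inl a} := by
        ext u
        simp only [Set.mem_setOf_eq, Set.mem_singleton_iff, kstar_adj_inr]
        constructor
        · rintro ⟨⟨m, rfl, hm⟩, hcol⟩
          simp only [Sum.elim_inl, id] at hcol
          rw [hcol]
        · rintro rfl
          exact ⟨⟨a, rfl, ha⟩, by simp⟩
      rw [hset, Set.ncard_singleton]
      exact odd_one

lemma hasOdd (n : ℕ) (hn : 2 ≤ n) : HasOddColoring (Kstar (n+1)) (n+1) := by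
  classical
  rcases Nat.even_or_odd (n+1) with heven | hodd
  · -- even case: pick any color not on the edge
    have hex : ∀ e : {e : Sym2 (Fin (n+1)) // ¬ e.IsDiag}, ∃ k : Fin (n+1), k ∉ e.val := by
      intro e
      obtain ⟨a, b, hab⟩ := sym2_rep e.val
      by_contra h
      push_neg at h
      have hsub : (Finset.univ : Finset (Fin (n+1))) ⊆ {a, b} := by
        intro k _
        have := h k
        rw [hab, Sym2.mem_iff] at this
        simpa using this
      have := Finset.card_le_card hsub
      simp only [Finset.card_univ, Fintype.card_fin] at this
      have h2 : ({a, b} : Finset (Fin (n+1))).card ≤ 2 := Finset.card_insert_le _ _ |>.trans (by simp)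
      omega
    choose g hg using hex
    refine ⟨Sum.elim id g, isOdd_of_g n hn g hg ?_⟩
    intro i
    have hcard := degcount (n+1) i
    simp only [Nat.add_sub_cancel] at hcard
    have hodd' : Odd (Finset.univ.filter
        (fun e : {e : Sym2 (Fin (n+1)) // ¬ e.IsDiag} => i ∈ e.val)).card := by
      rw [hcard]
      exact Nat.Even.sub_odd (by omega) heven odd_one
    obtain ⟨k, hk⟩ := exists_odd_fiber _ g hodd'
    refine ⟨k, ?_⟩
    have : {e : {e : Sym2 (Fin (n+1)) // ¬ e.IsDiag} | i ∈ e.val ∧ g e = k}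
        = ↑((Finset.univ.filter (fun e => i ∈ e.val)).filter (fun e => g e = k)) := by
      ext e; simp
    rw [this, Set.ncard_coe_finset]
    exact hk
  · -- odd case: halving coloring
    obtain ⟨t, ht⟩ := half_exists n hodd
    set f : Sym2 (Fin (n+1)) → Fin (n+1) :=
      Sym2.lift ⟨fun a b => (a + b) * t, fun a b => by ring_nf⟩ with hf
    have hfmk : ∀ a b : Fin (n+1), f s(a, b) = (a + b) * t := fun a b => rfl
    set g : {e : Sym2 (Fin (n+1)) // ¬ e.IsDiag} → Fin (n+1) := fun e => f e.val with hgdef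
    have hone : (1 : Fin (n+1)) ≠ 0 := by
      intro h
      have := congrArg Fin.val h
      simp [Fin.val_one, Nat.mod_eq_of_lt (by omega : 1 < n+1)] at this
    have hg : ∀ e, g e ∉ e.val := by
      intro e hmem
      obtain ⟨a, b, hab⟩ := sym2_rep e.val
      have hne : a ≠ b := by
        intro h; exact e.2 (by rw [hab, Sym2.mk_isDiag_iff]; exact h)
      rw [hab] at hmem
      rw [hgdef] at hmem
      simp only at hmem
      rw [hab, hfmk, Sym2.mem_iff] at hmem
      rcases hmem with h | h
      · have : a + b = a + a := by
          have h2a : (a + a) * t = a := by linear_combination a * ht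
          exact half_cancel n t ht (h.trans h2a.symm)
        exact hne (add_left_cancel this).symm
      · have : a + b = b + b := by
          have h2b : (b + b) * t = b := by linear_combination b * ht
          exact half_cancel n t ht (h.trans h2b.symm)
        exact hne (add_right_cancel this)
    refine ⟨Sum.elim id g, isOdd_of_g n hn g hg ?_⟩
    intro i
    have hii : i + 1 ≠ i := by
      intro h
      exact hone (by linear_combination h)
    have hd : ¬ (s(i, i+1)).IsDiag := by
      rw [Sym2.mk_isDiag_iff]; exact fun h => hii h.symm
    refine ⟨(i + (i+1)) * t, ?_⟩
    have hset : {e : {e : Sym2 (Fin (n+1)) // ¬ e.IsDiag} | i ∈ e.val ∧ g e = (i + (i+1)) * t}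
        = {⟨s(i, i+1), hd⟩} := by
      ext e
      simp only [Set.mem_setOf_eq, Set.mem_singleton_iff]
      constructor
      · rintro ⟨hm, hcol⟩
        have hspec := Sym2.other_spec hm
        have hcol' : (i + Sym2.Mem.other hm) * t = (i + (i+1)) * t := by
          rw [← hfmk, hspec] at *
          exact hcol
        have := half_cancel n t ht hcol'
        have hj : Sym2.Mem.other hm = i + 1 := add_left_cancel this
        refine Subtype.ext ?_
        rw [← hspec, hj]
      · rintro rfl
        exact ⟨by simp, hfmk i (i+1)⟩
    rw [hset, Set.ncard_singleton]
    exact odd_one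

lemma noOdd (n : ℕ) (hn : 2 ≤ n) : ¬ HasOddColoring (Kstar (n+1)) n := by
  rintro ⟨φ, hproper, hodd⟩
  -- two branch vertices share a color
  obtain ⟨i, j, hij, hcol⟩ := Fintype.exists_ne_map_eq_of_card_lt
    (fun i : Fin (n+1) => φ (Sum.inl i)) (by simp)
  have hd : ¬ (s(i, j)).IsDiag := by rw [Sym2.mk_isDiag_iff]; exact hij
  set e : {e : Sym2 (Fin (n+1)) // ¬ e.IsDiag} := ⟨s(i, j), hd⟩ with he
  have hne : ((Kstar (n+1)).neighborSet (Sum.inr e)).Nonempty := by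
    refine ⟨Sum.inl i, ?_⟩
    rw [SimpleGraph.mem_neighborSet, kstar_adj_inr]
    exact ⟨i, rfl, by simp [he]⟩
  obtain ⟨k, hk⟩ := hodd (Sum.inr e) hne
  have hsub : ∀ k' : Fin n, {u | (Kstar (n+1)).Adj (Sum.inr e) u ∧ φ u = k'} =
      if k' = φ (Sum.inl i) then {Sum.inl i, Sum.inl j} else ∅ := by
    intro k'
    ext u
    simp only [Set.mem_setOf_eq, kstar_adj_inr]
    split_ifs with hcase
    · constructor
      · rintro ⟨⟨m, rfl, hm⟩, hcol'⟩
        rw [Sym2.mem_iff] at hm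
        rcases hm with rfl | rfl
        · exact Or.inl rfl
        · exact Or.inr rfl
      · rintro (rfl | rfl)
        · exact ⟨⟨i, rfl, by simp [he]⟩, hcase.symm⟩
        · exact ⟨⟨j, rfl, by simp [he]⟩, hcol.symm.trans hcase.symm⟩
    · simp only [Set.mem_empty_iff_false, iff_false]
      rintro ⟨⟨m, rfl, hm⟩, hcol'⟩
      rw [Sym2.mem_iff] at hm
      rcases hm with rfl | rfl
      · exact hcase hcol'.symm
      · exact hcase (hcol.trans hcol').symm
  rw [hsub k] at hk
  split_ifs at hk with hcase
  · rw [Set.ncard_pair (by simp [hij] : (Sum.inl i : Fin (n+1) ⊕ _) ≠ Sum.inl j)] at hk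
    exact (by decide : ¬ Odd 2) hk
  · simp [Set.ncard_empty] at hk

end KstarAux

/-- For `c ≥ 3`, `K*_c` has an odd `c`-coloring but no odd `(c-1)`-coloring,
i.e. `χ_o(K*_c) = c`. -/
theorem stmt_5 (c : ℕ) (hc : 3 ≤ c) :
    HasOddColoring (Kstar c) c ∧ ¬ HasOddColoring (Kstar c) (c - 1) := by
  obtain ⟨n, rfl⟩ : ∃ n, c = n + 1 := ⟨c - 1, by omega⟩
  have hn : 2 ≤ n := by omega
  refine ⟨KstarAux.hasOdd n hn, ?_⟩
  simpa using KstarAux.noOdd n hn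
end

section
/- Key Lemma: Let c ≥ 5 and let G be a graph with no odd c-coloring, but such that every proper subgraph of G has an odd c-coloring. Call a vertex of degree at least 3 'easy' if it has odd degree or has a neighbor of degree 2. If v is an easy vertex of G, then 2·d(v) ≥ n_2(v) + n_e(v) + c, where n_2(v) is the number of degree-2 neighbors of v and n_e(v) is the number of easy neighbors of v. -/
/-- A vertex is *easy* if it has degree at least 3 and either odd degree or a
neighbor of degree 2. -/
def IsEasy {V : Type*} (G : SimpleGraph V) (v : V) : Prop :=
  3 ≤ (G.neighborSet v).ncard ∧
    (Odd (G.neighborSet v).ncard ∨ ∃ u ∈ G.neighborSet v, (G.neighborSet u).ncard = 2)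

section OddKeyAux
open Finset
set_option linter.unusedSectionVars false

namespace OddKey
variable {V : Type*} [Fintype V] {c : ℕ}

variable {V : Type*} [Fintype V] {c : ℕ}

/-- number of neighbors of `p` colored `k`. -/
noncomputable def cnt (G : SimpleGraph V) (ψ : V → Fin c) (p : V) (k : Fin c) : ℕ :=
  {u | G.Adj p u ∧ ψ u = k}.ncard

/-- `p` is satisfied: has an odd color class in its neighborhood (if any neighbor). -/
def SatF (G : SimpleGraph V) (ψ : V → Fin c) (y : V) : Prop :=
  (G.neighborSet y).Nonempty → ∃ k, Odd (cnt G ψ y k)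

/-- colors `b` such that recoloring `z` with `b` leaves `p` with no odd class. -/
noncomputable def BadB [DecidableEq V] (G : SimpleGraph V) (ψ : V → Fin c) (z p : V) : Finset (Fin c) :=
  Finset.univ.filter (fun b => ∀ k, Even (cnt G (Function.update ψ z b) p k))

lemma cnt_eq_card (G : SimpleGraph V) [DecidableRel G.Adj] (ψ : V → Fin c) (p : V) (k : Fin c) :
    cnt G ψ p k = ((G.neighborFinset p).filter (fun u => ψ u = k)).card := by
  classical
  rw [cnt, Set.ncard_eq_toFinset_card']
  congr 1
  ext u
  simp [SimpleGraph.mem_neighborFinset]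

lemma cnt_congr (G : SimpleGraph V) (ψ ψ' : V → Fin c) (p : V) (k : Fin c)
    (h : ∀ u, G.Adj p u → ψ' u = ψ u) : cnt G ψ' p k = cnt G ψ p k := by
  unfold cnt
  congr 1
  ext u
  exact and_congr_right fun hu => by rw [h u hu]

lemma cnt_update (G : SimpleGraph V) [DecidableEq V] (ψ : V → Fin c) {z p : V}
    (hzp : G.Adj p z) (b k : Fin c) :
    cnt G (Function.update ψ z b) p k
      = {u | G.Adj p u ∧ u ≠ z ∧ ψ u = k}.ncard + (if b = k then 1 else 0) := by
  rcases eq_or_ne b k with hbk | hbk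
  · subst hbk
    rw [if_pos rfl]
    have hset : {u | G.Adj p u ∧ Function.update ψ z b u = b}
        = insert z {u | G.Adj p u ∧ u ≠ z ∧ ψ u = b} := by
      ext u
      rcases eq_or_ne u z with rfl | huz
      · simp [hzp]
      · simp [huz, Function.update_of_ne huz]
    rw [cnt, hset, Set.ncard_insert_of_notMem (by simp)]
  · rw [if_neg hbk]
    have hset : {u | G.Adj p u ∧ Function.update ψ z b u = k}
        = {u | G.Adj p u ∧ u ≠ z ∧ ψ u = k} := by
      ext u
      rcases eq_or_ne u z with rfl | huz
      · simp [Function.update_self, hbk]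
      · simp [huz, Function.update_of_ne huz]
    rw [cnt, hset, Nat.add_zero]

lemma badB_card (G : SimpleGraph V) [DecidableEq V] (ψ : V → Fin c) {z p : V}
    (hzp : G.Adj p z) : (BadB G ψ z p).card ≤ 1 := by
  rw [Finset.card_le_one]
  intro b₁ h₁ b₂ h₂
  by_contra hne
  rw [BadB, Finset.mem_filter] at h₁ h₂
  have e₁ := h₁.2 b₁
  have e₂ := h₂.2 b₁
  rw [cnt_update G ψ hzp, if_pos rfl] at e₁
  rw [cnt_update G ψ hzp, if_neg (Ne.symm hne)] at e₂
  rw [Nat.even_add_one] at e₁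
  simp at e₂
  exact e₁ e₂

lemma odd_deg_sat (G : SimpleGraph V) (ψ : V → Fin c)
    {p : V} (hp : Odd (G.neighborSet p).ncard) : ∃ k, Odd (cnt G ψ p k) := by
  classical
  by_contra h
  push_neg at h
  simp only [Nat.not_odd_iff_even] at h
  have hsum : (G.neighborFinset p).card
      = ∑ k ∈ (Finset.univ : Finset (Fin c)), ((G.neighborFinset p).filter (fun u => ψ u = k)).card :=
    Finset.card_eq_sum_card_fiberwise (fun u _ => Finset.mem_univ (ψ u))
  have heven : Even (G.neighborFinset p).card := by
    rw [hsum]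
    exact Finset.even_sum _ (fun k _ => by rw [← cnt_eq_card]; exact h k)
  have hnc : (G.neighborSet p).ncard = (G.neighborFinset p).card := by
    rw [SimpleGraph.neighborFinset_def, Set.ncard_eq_toFinset_card']
  rw [← Nat.not_even_iff_odd, hnc] at hp
  exact hp heven

lemma sat_congr (G : SimpleGraph V) (ψ ψ' : V → Fin c) (y : V)
    (h : ∀ u, G.Adj y u → ψ' u = ψ u) (hs : SatF G ψ y) : SatF G ψ' y := by
  intro hne
  obtain ⟨k, hk⟩ := hs hne
  exact ⟨k, by rwa [cnt_congr G ψ ψ' y k h]⟩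

lemma fix_step [DecidableEq V] (G : SimpleGraph V) (hc : 5 ≤ c) {z : V}
    (hz : (G.neighborSet z).ncard = 2) (ψ : V → Fin c) :
    ∃ ψ' : V → Fin c,
      (∀ a b, G.Adj a b → ψ a ≠ ψ b → ψ' a ≠ ψ' b) ∧
      (∀ a b, G.Adj a b → (a = z ∨ b = z) → ψ' a ≠ ψ' b) ∧
      (∀ y, G.Adj z y → SatF G ψ' y) ∧
      (∀ y, ¬ G.Adj z y → SatF G ψ y → SatF G ψ' y) := by
  obtain ⟨p, q, hpq, hN⟩ := Set.ncard_eq_two.mp hz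
  have hzp : G.Adj z p := by rw [← SimpleGraph.mem_neighborSet, hN]; simp
  have hzq : G.Adj z q := by rw [← SimpleGraph.mem_neighborSet, hN]; simp
  set Forb : Finset (Fin c) := {ψ p, ψ q} ∪ BadB G ψ z p ∪ BadB G ψ z q with hForb
  have hcard : Forb.card < c := by
    have h1 : Forb.card ≤ 2 + 1 + 1 := by
      calc Forb.card ≤ ({ψ p, ψ q} ∪ BadB G ψ z p : Finset (Fin c)).card + (BadB G ψ z q).card :=
            Finset.card_union_le _ _
        _ ≤ (({ψ p, ψ q} : Finset (Fin c)).card + (BadB G ψ z p).card) + (BadB G ψ z q).card := by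
            exact Nat.add_le_add_right (Finset.card_union_le _ _) _
        _ ≤ 2 + 1 + 1 := by
            have := badB_card G ψ hzp.symm
            have := badB_card G ψ hzq.symm
            have : ({ψ p, ψ q} : Finset (Fin c)).card ≤ 2 := Finset.card_insert_le _ _ |>.trans (by simp)
            omega
    omega
  have hex : ∃ b : Fin c, b ∉ Forb := by
    by_contra hall
    push_neg at hall
    have : (Finset.univ : Finset (Fin c)).card ≤ Forb.card :=
      Finset.card_le_card (fun b _ => hall b)
    simp at this
    omega
  obtain ⟨b, hb⟩ := hex
  have hbp : b ≠ ψ p := fun h => hb (by rw [hForb]; simp [h])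
  have hbq : b ≠ ψ q := fun h => hb (by rw [hForb]; simp [h])
  have hbBp : b ∉ BadB G ψ z p := fun h => hb (by rw [hForb]; simp [h])
  have hbBq : b ∉ BadB G ψ z q := fun h => hb (by rw [hForb]; simp [h])
  refine ⟨Function.update ψ z b, ?_, ?_, ?_, ?_⟩
  · intro a b' hab hne
    rcases eq_or_ne a z with haz | haz
    · subst haz
      have hb' : b' ∈ ({p, q} : Set V) := by rw [← hN]; exact hab
      have hb'z : b' ≠ a := fun h => G.irrefl (h ▸ hab)
      rw [Function.update_self, Function.update_of_ne hb'z]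
      rcases hb' with rfl | rfl
      · exact hbp
      · exact hbq
    · rcases eq_or_ne b' z with hb'z | hb'z
      · subst hb'z
        have ha' : a ∈ ({p, q} : Set V) := by rw [← hN]; exact hab.symm
        rw [Function.update_self, Function.update_of_ne haz]
        rcases ha' with rfl | rfl
        · exact fun h => hbp h.symm
        · exact fun h => hbq h.symm
      · rwa [Function.update_of_ne haz, Function.update_of_ne hb'z]
  · intro a b' hab hor
    rcases hor with haz | hbz
    · subst haz
      have hb' : b' ∈ ({p, q} : Set V) := by rw [← hN]; exact hab
      have hb'z : b' ≠ a := fun h => G.irrefl (h ▸ hab)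
      rw [Function.update_self, Function.update_of_ne hb'z]
      rcases hb' with rfl | rfl
      · exact hbp
      · exact hbq
    · subst hbz
      have ha' : a ∈ ({p, q} : Set V) := by rw [← hN]; exact hab.symm
      have haz : a ≠ b' := fun h => G.irrefl (h ▸ hab.symm)
      rw [Function.update_self, Function.update_of_ne haz]
      rcases ha' with rfl | rfl
      · exact fun h => hbp h.symm
      · exact fun h => hbq h.symm
  · intro y hy _
    have hy' : y ∈ ({p, q} : Set V) := by rw [← hN]; exact hy
    have hbad : b ∉ BadB G ψ z y := by rcases hy' with rfl | rfl <;> assumption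
    rw [BadB, Finset.mem_filter] at hbad
    push_neg at hbad
    obtain ⟨k, hk⟩ := hbad (Finset.mem_univ b)
    exact ⟨k, Nat.not_even_iff_odd.mp hk⟩
  · intro y hy hs
    refine sat_congr G ψ _ y (fun u hu => ?_) hs
    have huz : u ≠ z := fun h => hy ((h ▸ hu).symm)
    exact Function.update_of_ne huz b ψ

lemma fix_all [DecidableEq V] (G : SimpleGraph V) (hc : 5 ≤ c) (S : Finset V)
    (hS : ∀ z ∈ S, (G.neighborSet z).ncard = 2) :
    ∀ ψ : V → Fin c, ∃ ψ' : V → Fin c,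
      (∀ a b, G.Adj a b → (ψ a ≠ ψ b ∨ a ∈ S ∨ b ∈ S) → ψ' a ≠ ψ' b) ∧
      (∀ y, (SatF G ψ y ∨ ∃ z ∈ S, G.Adj z y) → SatF G ψ' y) := by
  induction S using Finset.induction_on with
  | empty =>
    intro ψ
    refine ⟨ψ, fun a b hab h => ?_, fun y h => ?_⟩
    · rcases h with h | h | h
      · exact h
      all_goals simp at h
    · rcases h with h | ⟨z, hz, _⟩
      · exact h
      · simp at hz
  | @insert z S' hzS' ih =>
    intro ψ
    obtain ⟨ψ₁, h1, h2, h3, h4⟩ := fix_step G hc (hS z (Finset.mem_insert_self z S')) ψ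
    obtain ⟨ψ', k1, k2⟩ := ih (fun z' hz' => hS z' (Finset.mem_insert_of_mem hz')) ψ₁
    refine ⟨ψ', fun a b hab h => ?_, fun y h => ?_⟩
    · rcases h with h | h | h
      · exact k1 a b hab (Or.inl (h1 a b hab h))
      · rcases Finset.mem_insert.mp h with rfl | h
        · exact k1 a b hab (Or.inl (h2 a b hab (Or.inl rfl)))
        · exact k1 a b hab (Or.inr (Or.inl h))
      · rcases Finset.mem_insert.mp h with rfl | h
        · exact k1 a b hab (Or.inl (h2 a b hab (Or.inr rfl)))
        · exact k1 a b hab (Or.inr (Or.inr h))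
    · rcases h with h | ⟨z', hz', hadj⟩
      · by_cases hzy : G.Adj z y
        · exact k2 y (Or.inl (h3 y hzy))
        · exact k2 y (Or.inl (h4 y hzy h))
      · rcases Finset.mem_insert.mp hz' with rfl | hz'
        · exact k2 y (Or.inl (h3 y hadj))
        · exact k2 y (Or.inr ⟨z', hz', hadj⟩)
lemma sep_card (G : SimpleGraph V) [DecidableRel G.Adj] (v : V) (P : V → Prop) [DecidablePred P] :
    {u ∈ G.neighborSet v | P u}.ncard = ((G.neighborFinset v).filter P).card := by
  classical
  rw [Set.ncard_eq_toFinset_card']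
  congr 1
  ext u
  simp [SimpleGraph.mem_neighborFinset]

lemma nbhd_card (G : SimpleGraph V) [DecidableRel G.Adj] (v : V) :
    (G.neighborSet v).ncard = (G.neighborFinset v).card := by
  rw [SimpleGraph.neighborFinset_def, Set.ncard_eq_toFinset_card']


end OddKey
end OddKeyAux

open OddKey in
set_option maxHeartbeats 1000000 in
/-- Key Lemma: let `c ≥ 5` and let `G` have no odd `c`-coloring while every proper
subgraph of `G` has one.  If `v` is an easy vertex, then
`2·d(v) ≥ n₂(v) + n_e(v) + c`. -/
theorem stmt_7 {V : Type*} [Fintype V] (G : SimpleGraph V) (c : ℕ) (hc : 5 ≤ c)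
    (hG : ¬ HasOddColoring G c)
    (hmin : ∀ H : G.Subgraph, H ≠ ⊤ → HasOddColoring H.coe c)
    (v : V) (hv : IsEasy G v) :
    {u ∈ G.neighborSet v | (G.neighborSet u).ncard = 2}.ncard +
      {u ∈ G.neighborSet v | IsEasy G u}.ncard + c ≤
        2 * (G.neighborSet v).ncard := by
  classical
  by_contra hgoal
  push_neg at hgoal
  -- Finset versions of the cardinalities
  rw [sep_card G v (fun u => (G.neighborSet u).ncard = 2),
      sep_card G v (fun u => IsEasy G u), nbhd_card G v] at hgoal
  set Nf := G.neighborFinset v with hNf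
  set D2f := Nf.filter (fun u => (G.neighborSet u).ncard = 2) with hD2f
  set Ef := Nf.filter (fun u => IsEasy G u) with hEf
  have hD2sub : D2f ⊆ Nf := Finset.filter_subset _ _
  have hEsub : Ef ⊆ Nf := Finset.filter_subset _ _
  have hcards : D2f.card + Ef.card ≤ Nf.card := by
    rw [← Finset.card_union_of_disjoint]
    · exact Finset.card_le_card (Finset.union_subset hD2sub hEsub)
    · rw [Finset.disjoint_left]
      intro u hu hu'
      rw [hD2f, Finset.mem_filter] at hu
      rw [hEf, Finset.mem_filter] at hu'
      have := hu'.2.1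
      omega
  -- the subgraph G - v
  set H : G.Subgraph :=
    { verts := {v}ᶜ
      Adj := fun a b => G.Adj a b ∧ a ≠ v ∧ b ≠ v
      adj_sub := fun h => h.1
      edge_vert := fun h => h.2.1
      symm := ⟨fun a b h => ⟨h.1.symm, h.2.2, h.2.1⟩⟩ } with hH
  have hHne : H ≠ ⊤ := by
    intro h
    have hv' : v ∈ H.verts := by rw [h]; trivial
    rw [hH] at hv'
    simp at hv'
  obtain ⟨φ, hφp, hφo⟩ := hmin H hHne
  set φh : V → Fin c := fun x => if h : x ∈ H.verts then φ ⟨x, h⟩ else ⟨0, by omega⟩ with hφh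
  have hmemH : ∀ x : V, x ≠ v → x ∈ H.verts := by
    intro x hx
    rw [hH]
    simpa using hx
  have hφhval : ∀ (x : V) (hx : x ∈ H.verts), φh x = φ ⟨x, hx⟩ := by
    intro x hx
    rw [hφh]
    exact dif_pos hx
  -- properness transfer
  have T1 : ∀ a b, G.Adj a b → a ≠ v → b ≠ v → φh a ≠ φh b := by
    intro a b hab ha hb
    rw [hφhval a (hmemH a ha), hφhval b (hmemH b hb)]
    apply hφp
    rw [SimpleGraph.Subgraph.coe_adj]
    exact ⟨hab, ha, hb⟩
  -- odd-condition transfer for vertices away from v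
  have T2 : ∀ y, y ≠ v → ¬ G.Adj y v → (G.neighborSet y).Nonempty →
      ∃ k, Odd (cnt G φh y k) := by
    intro y hy hyv hne
    set yh : ↥H.verts := ⟨y, hmemH y hy⟩ with hyh
    have hne' : (H.coe.neighborSet yh).Nonempty := by
      obtain ⟨u, hu⟩ := hne
      have huv : u ≠ v := by rintro rfl; exact hyv hu
      refine ⟨⟨u, hmemH u huv⟩, ?_⟩
      rw [SimpleGraph.mem_neighborSet, SimpleGraph.Subgraph.coe_adj]
      exact ⟨hu, hy, huv⟩
    obtain ⟨k, hk⟩ := hφo yh hne'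
    refine ⟨k, ?_⟩
    have himg : Subtype.val '' {u | H.coe.Adj yh u ∧ φ u = k}
        = {u | G.Adj y u ∧ φh u = k} := by
      ext u
      constructor
      · rintro ⟨w, ⟨hadj, hwk⟩, rfl⟩
        rw [SimpleGraph.Subgraph.coe_adj] at hadj
        refine ⟨hadj.1, ?_⟩
        rw [hφhval w.1 w.2]
        rw [← hwk]
      · rintro ⟨hadj, huk⟩
        have huv : u ≠ v := by rintro rfl; exact hyv hadj
        refine ⟨⟨u, hmemH u huv⟩, ⟨?_, ?_⟩, rfl⟩
        · rw [SimpleGraph.Subgraph.coe_adj]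
          exact ⟨hadj, hy, huv⟩
        · rw [← hφhval u (hmemH u huv)]
          exact huk
    rw [← Set.ncard_image_of_injective _ Subtype.val_injective, himg] at hk
    exact hk
  -- the forbidden set for the color of v
  set F : Finset (Fin c) :=
    ((Nf \ D2f).image φh) ∪ ((Nf \ Ef).biUnion (fun u => BadB G φh v u)) with hF
  have hFcard : F.card < c := by
    have h1 : ((Nf \ D2f).image φh).card ≤ Nf.card - D2f.card := by
      calc ((Nf \ D2f).image φh).card ≤ (Nf \ D2f).card := Finset.card_image_le
        _ = Nf.card - D2f.card := Finset.card_sdiff_of_subset hD2sub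
    have h2 : ((Nf \ Ef).biUnion (fun u => BadB G φh v u)).card ≤ Nf.card - Ef.card := by
      calc ((Nf \ Ef).biUnion (fun u => BadB G φh v u)).card
          ≤ ∑ u ∈ Nf \ Ef, (BadB G φh v u).card := Finset.card_biUnion_le
        _ ≤ ∑ _u ∈ Nf \ Ef, 1 := by
            apply Finset.sum_le_sum
            intro u hu
            apply badB_card
            have : u ∈ Nf := (Finset.mem_sdiff.mp hu).1
            rw [hNf, SimpleGraph.mem_neighborFinset] at this
            exact this.symm
        _ = (Nf \ Ef).card := by simp
        _ = Nf.card - Ef.card := Finset.card_sdiff_of_subset hEsub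
    have h3 : F.card ≤ (Nf.card - D2f.card) + (Nf.card - Ef.card) :=
      (Finset.card_union_le _ _).trans (Nat.add_le_add h1 h2)
    have h4 : D2f.card ≤ Nf.card := Finset.card_le_card hD2sub
    have h5 : Ef.card ≤ Nf.card := Finset.card_le_card hEsub
    omega
  have hex : ∃ b : Fin c, b ∉ F := by
    by_contra hall
    push_neg at hall
    have : (Finset.univ : Finset (Fin c)).card ≤ F.card :=
      Finset.card_le_card (fun b _ => hall b)
    simp at this
    omega
  obtain ⟨α, hα⟩ := hex
  set ψ₁ : V → Fin c := Function.update φh v α with hψ₁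
  -- the set of degree-2 vertices to be recolored
  set S : Finset V :=
    D2f ∪ Ef.biUnion (fun u => (G.neighborFinset u).filter (fun w => (G.neighborSet w).ncard = 2))
    with hS
  have hSdeg : ∀ z ∈ S, (G.neighborSet z).ncard = 2 := by
    intro z hz
    rw [hS, Finset.mem_union] at hz
    rcases hz with hz | hz
    · exact (Finset.mem_filter.mp hz).2
    · obtain ⟨u, _, hzu⟩ := Finset.mem_biUnion.mp hz
      exact (Finset.mem_filter.mp hzu).2
  obtain ⟨ψ', k1, k2⟩ := fix_all G hc S hSdeg ψ₁
  -- initial near-properness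
  have I1 : ∀ a b, G.Adj a b → a ∉ S → b ∉ S → ψ₁ a ≠ ψ₁ b := by
    have key : ∀ b, G.Adj v b → b ∉ S → ψ₁ v ≠ ψ₁ b := by
      intro b hab hbS
      have hbv : b ≠ v := fun h => G.irrefl (h ▸ hab)
      have hbNf : b ∈ Nf := by rw [hNf, SimpleGraph.mem_neighborFinset]; exact hab
      have hbD2 : b ∉ D2f := fun h => hbS (by rw [hS]; exact Finset.mem_union_left _ h)
      have : φh b ∈ F := by
        rw [hF]
        apply Finset.mem_union_left
        exact Finset.mem_image_of_mem φh (Finset.mem_sdiff.mpr ⟨hbNf, hbD2⟩)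
      rw [hψ₁, Function.update_self, Function.update_of_ne hbv]
      intro h
      exact hα (h ▸ this)
    intro a b hab haS hbS
    rcases eq_or_ne a v with rfl | hav
    · exact key b hab hbS
    · rcases eq_or_ne b v with rfl | hbv
      · exact fun h => key a hab.symm haS h.symm
      · rw [hψ₁, Function.update_of_ne hav, Function.update_of_ne hbv]
        exact T1 a b hab hav hbv
  -- initial near-satisfaction
  have I2 : ∀ y, SatF G ψ₁ y ∨ ∃ z ∈ S, G.Adj z y := by
    intro y
    rcases eq_or_ne y v with rfl | hyv
    · by_cases hodd : Odd (G.neighborSet y).ncard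
      · exact Or.inl (fun _ => odd_deg_sat G ψ₁ hodd)
      · rcases hv.2 with h | ⟨u, hu, hu2⟩
        · exact absurd h hodd
        · refine Or.inr ⟨u, ?_, hu.symm⟩
          rw [hS]
          apply Finset.mem_union_left
          rw [hD2f, Finset.mem_filter]
          exact ⟨by rw [hNf, SimpleGraph.mem_neighborFinset]; exact hu, hu2⟩
    · by_cases hyN : G.Adj v y
      · have hyNf : y ∈ Nf := by rw [hNf, SimpleGraph.mem_neighborFinset]; exact hyN
        by_cases heasy : IsEasy G y
        · by_cases hodd : Odd (G.neighborSet y).ncard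
          · exact Or.inl (fun _ => odd_deg_sat G ψ₁ hodd)
          · rcases heasy.2 with h | ⟨w, hw, hw2⟩
            · exact absurd h hodd
            · refine Or.inr ⟨w, ?_, hw.symm⟩
              rw [hS]
              apply Finset.mem_union_right
              apply Finset.mem_biUnion.mpr
              refine ⟨y, ?_, ?_⟩
              · rw [hEf, Finset.mem_filter]; exact ⟨hyNf, heasy⟩
              · rw [Finset.mem_filter, SimpleGraph.mem_neighborFinset]
                exact ⟨hw, hw2⟩
        · left
          intro _
          have hyE : y ∈ Nf \ Ef := by
            rw [Finset.mem_sdiff, hEf, Finset.mem_filter]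
            exact ⟨hyNf, fun h => heasy h.2⟩
          have hnb : α ∉ BadB G φh v y := by
            intro h
            apply hα
            rw [hF]
            apply Finset.mem_union_right
            exact Finset.mem_biUnion.mpr ⟨y, hyE, h⟩
          rw [BadB, Finset.mem_filter] at hnb
          push_neg at hnb
          obtain ⟨k, hk⟩ := hnb (Finset.mem_univ α)
          exact ⟨k, Nat.not_even_iff_odd.mp hk⟩
      · left
        intro hne
        have hyv' : ¬ G.Adj y v := fun h => hyN h.symm
        obtain ⟨k, hk⟩ := T2 y hyv hyv' hne
        refine ⟨k, ?_⟩
        rwa [cnt_congr G φh ψ₁ y k] 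
        intro u hu
        have huv : u ≠ v := fun h => hyv' (h ▸ hu)
        rw [hψ₁]
        exact Function.update_of_ne huv α φh
  -- conclude
  apply hG
  refine ⟨ψ', ?_, ?_⟩
  · intro a b hab
    by_cases haS : a ∈ S
    · exact k1 a b hab (Or.inr (Or.inl haS))
    · by_cases hbS : b ∈ S
      · exact k1 a b hab (Or.inr (Or.inr hbS))
      · exact k1 a b hab (Or.inl (I1 a b hab haS hbS))
  · intro y hy
    exact k2 y (I2 y) hy
end

section
/- For c ≥ 7, every graph G with mad(G) ≤ (4c-4)/(c+1) has an odd c-coloring (Cranston's conjecture for c ≥ 7). -/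
namespace CranstonAux

open Finset

variable {V : Type*} [Fintype V] [DecidableEq V]

/-- restriction of a graph to a finite vertex set -/
def rg (G : SimpleGraph V) (s : Finset V) : SimpleGraph V where
  Adj u v := G.Adj u v ∧ u ∈ s ∧ v ∈ s
  symm := by constructor; intro u v h; exact ⟨h.1.symm, h.2.2, h.2.1⟩
  loopless := by constructor; intro u h; exact G.loopless.irrefl u h.1

lemma rg_adj {G : SimpleGraph V} {s : Finset V} {u v : V} :
    (rg G s).Adj u v ↔ G.Adj u v ∧ u ∈ s ∧ v ∈ s := Iff.rfl

variable {c : ℕ} (G' : SimpleGraph V) [DecidableRel G'.Adj]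

/-- count of colored (= not in `A`) neighbors of `p` with color `k`. -/
def cntIn (φ : V → Fin c) (A : Finset V) (p : V) (k : Fin c) : ℕ :=
  ((G'.neighborFinset p).filter (fun q => q ∉ A ∧ φ q = k)).card

/-- invariant during the sequential recoloring of the deleted set `D`;
`A` is the set of still-uncolored vertices. -/
def Inv (D : Finset V) (ψ φ : V → Fin c) (A : Finset V) : Prop :=
  (∀ p q, G'.Adj p q → p ∉ A → q ∉ A → φ p ≠ φ q) ∧
  (∀ p, (∃ w ∈ D, G'.Adj p w) → G'.neighborFinset p ∩ A = ∅ →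
      ∃ k, Odd (cntIn G' φ A p k)) ∧
  (∀ p, p ∉ D → φ p = ψ p)

lemma guard_card_le (base : Fin c → ℕ) :
    ((Finset.univ : Finset (Fin c)).filter
      (fun β => ∀ k, ¬ Odd (base k + if β = k then 1 else 0))).card ≤ 1 := by
  refine Finset.card_le_one.mpr ?_
  intro a ha b hb
  simp only [Finset.mem_filter] at ha hb
  by_contra hab
  have h1 := ha.2 a
  have h2 := hb.2 a
  rw [if_pos rfl] at h1
  rw [if_neg (fun h => hab h.symm)] at h2
  simp only [Nat.odd_iff] at h1 h2
  omega

set_option maxHeartbeats 1000000 in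
lemma step (D : Finset V) (ψ φ₀ : V → Fin c) (v : V) (T : List V)
    (hvD : v ∈ D) (hvT : v ∉ T)
    (hbound : ((G'.neighborFinset v).filter (fun q => q ∉ T.toFinset)).card
        + ((G'.neighborFinset v).filter
            (fun p => G'.neighborFinset p ∩ T.toFinset = ∅)).card < c)
    (hInv : Inv G' D ψ φ₀ (insert v T.toFinset)) :
    ∃ β, Inv G' D ψ (Function.update φ₀ v β) T.toFinset := by
  classical
  obtain ⟨h1, h2, h3⟩ := hInv
  set Av : Finset V := insert v T.toFinset with hAv
  set F1 : Finset (Fin c) := ((G'.neighborFinset v).filter (fun q => q ∉ Av)).image φ₀ with hF1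
  set Gd : Finset V := (G'.neighborFinset v).filter
      (fun p => G'.neighborFinset p ∩ T.toFinset = ∅) with hGd
  set Bad : V → Finset (Fin c) := fun p =>
    (Finset.univ : Finset (Fin c)).filter
      (fun β => ∀ k, ¬ Odd (cntIn G' φ₀ Av p k + if β = k then 1 else 0)) with hBad
  set F : Finset (Fin c) := F1 ∪ Gd.biUnion Bad with hF
  have hFcard : F.card < c := by
    have hF1le : F1.card ≤ ((G'.neighborFinset v).filter (fun q => q ∉ T.toFinset)).card := by
      refine le_trans Finset.card_image_le (Finset.card_le_card ?_)
      intro q hq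
      simp only [Finset.mem_filter, hAv, Finset.mem_insert] at hq ⊢
      exact ⟨hq.1, fun h => hq.2 (Or.inr h)⟩
    have hBle : (Gd.biUnion Bad).card ≤ Gd.card := by
      refine le_trans (Finset.card_biUnion_le) ?_
      calc ∑ p ∈ Gd, (Bad p).card ≤ ∑ p ∈ Gd, 1 :=
            Finset.sum_le_sum (fun p _ => guard_card_le _)
        _ = Gd.card := by simp
    calc F.card ≤ F1.card + (Gd.biUnion Bad).card := Finset.card_union_le _ _
      _ ≤ _ + _ := Nat.add_le_add hF1le hBle
      _ < c := hbound
  have hex : ∃ β : Fin c, β ∉ F := by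
    by_contra hall
    push_neg at hall
    have : F = Finset.univ := Finset.eq_univ_iff_forall.mpr hall
    rw [this] at hFcard
    simp at hFcard
  obtain ⟨β, hβ⟩ := hex
  have hβF1 : β ∉ F1 := fun h => hβ (Finset.mem_union_left _ h)
  have hβBad : ∀ p ∈ Gd, β ∉ Bad p := by
    intro p hp h
    exact hβ (Finset.mem_union_right _ (Finset.mem_biUnion.mpr ⟨p, hp, h⟩))
  have hvT' : v ∉ T.toFinset := by simpa using hvT
  have key1 : ∀ q, G'.Adj v q → q ∉ Av → β ≠ φ₀ q := by
    intro q hadj hq heq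
    apply hβF1
    rw [hF1]
    refine Finset.mem_image.mpr ⟨q, ?_, heq.symm⟩
    simp only [Finset.mem_filter, SimpleGraph.mem_neighborFinset]
    exact ⟨hadj, hq⟩
  refine ⟨β, ?_, ?_, ?_⟩
  · -- properness
    intro p q hadj hp hq
    by_cases hpv : p = v
    · have hqv : q ≠ v := by
        rintro rfl
        exact G'.loopless.irrefl q (hpv ▸ hadj)
      rw [hpv, Function.update_self, Function.update_of_ne hqv]
      refine key1 q (hpv ▸ hadj) ?_
      simp only [hAv, Finset.mem_insert]
      rintro (h | h)
      · exact hqv h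
      · exact hq h
    · by_cases hqv : q = v
      · rw [Function.update_of_ne hpv, hqv, Function.update_self]
        intro heq
        refine key1 p (hqv ▸ hadj.symm) ?_ heq.symm
        simp only [hAv, Finset.mem_insert]
        rintro (h | h)
        · exact hpv h
        · exact hp h
      · rw [Function.update_of_ne hpv, Function.update_of_ne hqv]
        refine h1 p q hadj ?_ ?_ <;> simp only [hAv, Finset.mem_insert] <;> tauto
  · -- parity readiness
    intro p hpD hpT
    by_cases hpv : G'.Adj p v
    · have hpGd : p ∈ Gd := by
        rw [hGd]
        simp only [Finset.mem_filter, SimpleGraph.mem_neighborFinset]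
        exact ⟨hpv.symm, hpT⟩
      have hβp := hβBad p hpGd
      rw [hBad] at hβp
      simp only [Finset.mem_filter, Finset.mem_univ, true_and, not_forall, not_not] at hβp
      obtain ⟨k, hk⟩ := hβp
      refine ⟨k, ?_⟩
      by_cases hbk : β = k
      · rw [if_pos hbk] at hk
        have hset : ((G'.neighborFinset p).filter
            (fun q => q ∉ T.toFinset ∧ Function.update φ₀ v β q = k))
            = ((G'.neighborFinset p).filter (fun q => q ∉ Av ∧ φ₀ q = k)) ∪ {v} := by
          ext q
          simp only [Finset.mem_union, Finset.mem_filter, SimpleGraph.mem_neighborFinset,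
            Finset.mem_singleton]
          by_cases hqv : q = v
          · rw [hqv]
            simp [Function.update_self, hpv, hvT', hbk]
          · simp only [Function.update_of_ne hqv, hqv, or_false, hAv, Finset.mem_insert]
            tauto
        have hvnot : v ∉ ((G'.neighborFinset p).filter (fun q => q ∉ Av ∧ φ₀ q = k)) := by
          simp [hAv]
        rw [cntIn, hset, Finset.card_union_of_disjoint (Finset.disjoint_singleton_right.mpr hvnot),
          Finset.card_singleton]
        exact hk
      · rw [if_neg hbk, Nat.add_zero] at hk
        have hset : ((G'.neighborFinset p).filter
            (fun q => q ∉ T.toFinset ∧ Function.update φ₀ v β q = k))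
            = ((G'.neighborFinset p).filter (fun q => q ∉ Av ∧ φ₀ q = k)) := by
          ext q
          simp only [Finset.mem_filter, SimpleGraph.mem_neighborFinset]
          by_cases hqv : q = v
          · rw [hqv]
            simp only [Function.update_self, hAv, Finset.mem_insert]
            constructor
            · rintro ⟨-, -, h⟩; exact absurd h hbk
            · rintro ⟨-, h, -⟩; simp at h
          · simp only [Function.update_of_ne hqv, hAv, Finset.mem_insert]
            tauto
        rw [cntIn, hset]
        exact hk
    · -- p unaffected
      have hpAv : G'.neighborFinset p ∩ Av = ∅ := by
        rw [Finset.eq_empty_iff_forall_notMem]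
        intro u hu
        rw [hAv] at hu
        simp only [Finset.mem_inter, SimpleGraph.mem_neighborFinset, Finset.mem_insert] at hu
        rcases hu.2 with h | h
        · exact hpv (h ▸ hu.1)
        · refine (Finset.eq_empty_iff_forall_notMem.mp hpT u) ?_
          simp only [Finset.mem_inter, SimpleGraph.mem_neighborFinset]
          exact ⟨hu.1, h⟩
      obtain ⟨k, hk⟩ := h2 p hpD hpAv
      refine ⟨k, ?_⟩
      have hset : ((G'.neighborFinset p).filter
          (fun q => q ∉ T.toFinset ∧ Function.update φ₀ v β q = k))
          = ((G'.neighborFinset p).filter (fun q => q ∉ Av ∧ φ₀ q = k)) := by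
        refine Finset.filter_congr ?_
        intro q hq
        have hqv : q ≠ v := by
          rintro rfl
          exact hpv ((SimpleGraph.mem_neighborFinset _ _ _).mp hq)
        simp only [Function.update_of_ne hqv, hAv, Finset.mem_insert]
        tauto
      rw [cntIn, hset]
      exact hk
  · intro p hp
    have hpv : p ≠ v := fun h => hp (h ▸ hvD)
    rw [Function.update_of_ne hpv]
    exact h3 p hp

lemma buildAux (D : Finset V) (ψ : V → Fin c) (L : List V)
    (hnd : L.Nodup)
    (hB : ∀ v T', (v :: T') <:+ L →
      ((G'.neighborFinset v).filter (fun q => q ∉ T'.toFinset)).card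
        + ((G'.neighborFinset v).filter
            (fun p => G'.neighborFinset p ∩ T'.toFinset = ∅)).card < c)
    (hLD : L.toFinset = D) :
    ∀ (T : List V) (φ₀ : V → Fin c), T <:+ L → Inv G' D ψ φ₀ T.toFinset →
      ∃ φ, Inv G' D ψ φ (∅ : Finset V) := by
  intro T
  induction T with
  | nil =>
    intro φ₀ _ h
    exact ⟨φ₀, by simpa using h⟩
  | cons v T' ih =>
    intro φ₀ hsuf hInv
    have hvD : v ∈ D := by
      rw [← hLD, List.mem_toFinset]
      exact hsuf.subset (by simp)
    have hnodup : (v :: T').Nodup := List.Nodup.sublist hsuf.sublist hnd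
    have hvT : v ∉ T' := (List.nodup_cons.mp hnodup).1
    have hInv' : Inv G' D ψ φ₀ (insert v T'.toFinset) := by
      rw [List.toFinset_cons] at hInv
      exact hInv
    obtain ⟨β, hβ⟩ := step G' D ψ φ₀ v T' hvD hvT (hB v T' hsuf) hInv'
    exact ih _ ((List.suffix_cons v T').trans hsuf) hβ

lemma master {H : SimpleGraph V} [DecidableRel H.Adj]
    (D : Finset V) (ψ : V → Fin c) (hψ : IsOddColoring H ψ)
    (hH : ∀ p q, H.Adj p q ↔ G'.Adj p q ∧ p ∉ D ∧ q ∉ D)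
    (L : List V) (hnd : L.Nodup) (hLD : L.toFinset = D)
    (hB : ∀ v T', (v :: T') <:+ L →
      ((G'.neighborFinset v).filter (fun q => q ∉ T'.toFinset)).card
        + ((G'.neighborFinset v).filter
            (fun p => G'.neighborFinset p ∩ T'.toFinset = ∅)).card < c)
    (hvD : ∀ v ∈ D, (∃ w ∈ D, G'.Adj v w) ∨ Odd (G'.neighborFinset v).card
        ∨ G'.neighborFinset v = ∅) :
    ∃ φ : V → Fin c, IsOddColoring G' φ := by
  classical
  have hInit : Inv G' D ψ ψ L.toFinset := by
    refine ⟨?_, ?_, fun p _ => rfl⟩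
    · intro p q hadj hp hq
      rw [hLD] at hp hq
      exact hψ.1 ((hH p q).mpr ⟨hadj, hp, hq⟩)
    · rintro p ⟨w, hwD, hw⟩ hint
      exfalso
      have hmem : w ∈ G'.neighborFinset p ∩ L.toFinset := by
        rw [Finset.mem_inter, SimpleGraph.mem_neighborFinset, hLD]
        exact ⟨hw, hwD⟩
      rw [hint] at hmem
      exact Finset.notMem_empty _ hmem
  obtain ⟨φ, hφ1, hφ2, hφ3⟩ :=
    buildAux G' D ψ L hnd hB hLD L ψ (List.suffix_refl L) (by simpa using hInit)
  refine ⟨φ, ?_, ?_⟩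
  · intro u w hadj
    exact hφ1 u w hadj (Finset.notMem_empty u) (Finset.notMem_empty w)
  · intro p hp
    obtain ⟨w₀, hw₀⟩ := hp
    rw [SimpleGraph.mem_neighborSet] at hw₀
    have hncard : ∀ k, {u | G'.Adj p u ∧ φ u = k}.ncard
        = ((G'.neighborFinset p).filter (fun u => φ u = k)).card := by
      intro k
      rw [show {u | G'.Adj p u ∧ φ u = k}
          = ↑((G'.neighborFinset p).filter (fun u => φ u = k)) by
        ext u; simp [SimpleGraph.mem_neighborFinset]]
      exact Set.ncard_coe_finset _
    by_cases hDnbr : ∃ w ∈ D, G'.Adj p w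
    · obtain ⟨k, hk⟩ := hφ2 p hDnbr (by simp)
      refine ⟨k, ?_⟩
      rw [hncard k]
      simpa [cntIn] using hk
    · by_cases hpD : p ∈ D
      · rcases hvD p hpD with h | h | h
        · exact absurd h hDnbr
        · have hsum : (G'.neighborFinset p).card
              = ∑ k : Fin c, ((G'.neighborFinset p).filter (fun u => φ u = k)).card :=
            Finset.card_eq_sum_card_fiberwise (fun x _ => Finset.mem_univ (φ x))
          by_contra hcon
          push_neg at hcon
          have hall : ∀ k : Fin c,
              (((G'.neighborFinset p).filter (fun u => φ u = k)).card) % 2 = 0 := by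
            intro k
            have := hcon k
            rw [hncard k, Nat.odd_iff] at this
            omega
          rw [Nat.odd_iff, hsum, Finset.sum_nat_mod] at h
          simp only [hall] at h
          simp at h
        · rw [Finset.eq_empty_iff_forall_notMem] at h
          exact absurd ((SimpleGraph.mem_neighborFinset _ _ _).mpr hw₀) (h w₀)
      · have hwD : ∀ u, G'.Adj p u → u ∉ D := fun u hu hud => hDnbr ⟨u, hud, hu⟩
        have hHnbr : (H.neighborSet p).Nonempty :=
          ⟨w₀, (hH p w₀).mpr ⟨hw₀, hpD, hwD _ hw₀⟩⟩
        obtain ⟨k, hk⟩ := hψ.2 p hHnbr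
        refine ⟨k, ?_⟩
        have hsets : {u | G'.Adj p u ∧ φ u = k} = {u | H.Adj p u ∧ ψ u = k} := by
          ext u
          simp only [Set.mem_setOf_eq, hH]
          constructor
          · rintro ⟨ha, hb⟩
            exact ⟨⟨ha, hpD, hwD u ha⟩, by rw [← hφ3 u (hwD u ha)]; exact hb⟩
          · rintro ⟨⟨ha, -, hu⟩, hb⟩
            exact ⟨ha, by rw [hφ3 u hu]; exact hb⟩
        rw [hsets]
        exact hk

section Counting

variable {c : ℕ}

lemma deg_zero (G' : SimpleGraph V) [DecidableRel G'.Adj] (s : Finset V)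
    (hmem : ∀ u v : V, G'.Adj u v → u ∈ s) :
    ∀ v, v ∉ s → G'.degree v = 0 := by
  intro v hv
  have : G'.neighborFinset v = ∅ := by
    rw [Finset.eq_empty_iff_forall_notMem]
    intro u hu
    exact hv (hmem v u ((SimpleGraph.mem_neighborFinset _ _ _).mp hu))
  rw [← SimpleGraph.card_neighborFinset_eq_degree, this, Finset.card_empty]

lemma sum_deg_le (G : SimpleGraph V) [DecidableRel G.Adj]
    (hmad : MadLE G ((4 * c - 4) / (c + 1))) (s : Finset V) (hs : s.Nonempty)
    [DecidableRel (rg G s).Adj] :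
    ((c:ℚ)+1) * (∑ v ∈ s, ((rg G s).degree v : ℚ)) ≤ (4*(c:ℚ)-4) * s.card := by
  classical
  set K : G.Subgraph :=
    { verts := ↑s
      Adj := (rg G s).Adj
      adj_sub := fun h => h.1
      edge_vert := fun h => h.2.1
      symm := (rg G s).symm } with hK
  have h1 := hmad K (by
    obtain ⟨v, hv⟩ := hs
    exact ⟨v, by simpa [hK] using hv⟩)
  have hE : K.edgeSet = (rg G s).edgeSet := by
    ext e
    induction e with
    | _ u v =>
      rw [SimpleGraph.Subgraph.mem_edgeSet, SimpleGraph.mem_edgeSet]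
  have hVcard : K.verts.ncard = s.card := by
    simp [hK, Set.ncard_coe_finset]
  have hEcard : K.edgeSet.ncard = (rg G s).edgeFinset.card := by
    rw [hE, ← SimpleGraph.coe_edgeFinset, Set.ncard_coe_finset]
  have hHS := SimpleGraph.sum_degrees_eq_twice_card_edges (rg G s)
  have hzero : ∀ v ∈ Finset.univ, v ∉ s → (rg G s).degree v = 0 := by
    intro v _ hv
    exact deg_zero (rg G s) s (fun u w h => h.2.1) v hv
  have hsum : ∑ v ∈ s, (rg G s).degree v = 2 * (rg G s).edgeFinset.card := by
    rw [← hHS]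
    exact Finset.sum_subset (Finset.subset_univ s) hzero
  have h2 : (∑ v ∈ s, ((rg G s).degree v : ℚ)) = 2 * (K.edgeSet.ncard : ℚ) := by
    rw [hEcard]
    rw [← Nat.cast_sum]
    rw [hsum]
    push_cast
    ring
  rw [hVcard] at h1
  rw [h2]
  have hne : ((c:ℚ)+1) ≠ 0 := by positivity
  have hpos : (0:ℚ) ≤ (c:ℚ)+1 := by positivity
  calc ((c:ℚ)+1) * (2 * (K.edgeSet.ncard : ℚ))
      ≤ ((c:ℚ)+1) * ((4 * c - 4) / (c + 1) * s.card) := by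
        exact mul_le_mul_of_nonneg_left h1 hpos
    _ = (4*(c:ℚ)-4) * s.card := by
        field_simp

lemma dc (G' : SimpleGraph V) [DecidableRel G'.Adj] (s : Finset V)
    (hmem : ∀ u v : V, G'.Adj u v → u ∈ s) :
    ∑ w ∈ s, ((G'.neighborFinset w).filter (fun u => G'.degree u = 2)).card
      = ∑ v ∈ s, (if G'.degree v = 2 then G'.degree v else 0) := by
  classical
  have step1 : ∀ w : V, ((G'.neighborFinset w).filter (fun u => G'.degree u = 2)).card
      = ∑ u : V, (if G'.Adj w u ∧ G'.degree u = 2 then 1 else 0) := by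
    intro w
    rw [show (G'.neighborFinset w).filter (fun u => G'.degree u = 2)
        = Finset.univ.filter (fun u => G'.Adj w u ∧ G'.degree u = 2) by
      ext u; simp [SimpleGraph.mem_neighborFinset]]
    rw [Finset.card_filter]
  calc ∑ w ∈ s, ((G'.neighborFinset w).filter (fun u => G'.degree u = 2)).card
      = ∑ w ∈ s, ∑ u : V, (if G'.Adj w u ∧ G'.degree u = 2 then 1 else 0) :=
        Finset.sum_congr rfl (fun w _ => step1 w)
    _ = ∑ w : V, ∑ u : V, (if G'.Adj w u ∧ G'.degree u = 2 then 1 else 0) := by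
        refine Finset.sum_subset (Finset.subset_univ s) ?_
        intro w _ hw
        refine Finset.sum_eq_zero ?_
        intro u _
        rw [if_neg]
        rintro ⟨ha, -⟩
        exact hw (hmem w u ha)
    _ = ∑ u : V, ∑ w : V, (if G'.Adj w u ∧ G'.degree u = 2 then 1 else 0) :=
        Finset.sum_comm
    _ = ∑ u : V, (if G'.degree u = 2 then G'.degree u else 0) := by
        refine Finset.sum_congr rfl ?_
        intro u _
        by_cases h2 : G'.degree u = 2
        · rw [if_pos h2]
          have hset : Finset.univ.filter (fun w => G'.Adj w u) = G'.neighborFinset u := by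
            ext w
            simp [SimpleGraph.mem_neighborFinset, SimpleGraph.adj_comm]
          calc ∑ w : V, (if G'.Adj w u ∧ G'.degree u = 2 then 1 else 0)
              = ∑ w : V, (if G'.Adj w u then 1 else 0) := by
                refine Finset.sum_congr rfl ?_
                intro w _
                by_cases h1 : G'.Adj w u <;> simp [h1, h2]
            _ = (Finset.univ.filter (fun w => G'.Adj w u)).card := by
                rw [Finset.card_filter]
            _ = G'.degree u := by
                rw [hset, SimpleGraph.card_neighborFinset_eq_degree]
        · rw [if_neg h2]
          refine Finset.sum_eq_zero ?_
          intro w _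
          rw [if_neg]
          rintro ⟨-, hb⟩
          exact h2 hb
    _ = ∑ u ∈ s, (if G'.degree u = 2 then G'.degree u else 0) := by
        refine (Finset.sum_subset (Finset.subset_univ s) ?_).symm
        intro u _ hu
        rw [deg_zero G' s hmem u hu]
        simp

lemma discharge (hc : 7 ≤ c) (G' : SimpleGraph V) [DecidableRel G'.Adj] (s : Finset V)
    (hmem : ∀ u v : V, G'.Adj u v → u ∈ s)
    (hedge : ∃ p q, G'.Adj p q)
    (hR1 : ¬ ∃ v ∈ s, G'.degree v = 0 ∨ (Odd (G'.degree v) ∧ 2 * G'.degree v < c))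
    (hR2 : ¬ ∃ u w, G'.Adj u w ∧ G'.degree u = 2 ∧ G'.degree w = 2)
    (hR3 : ¬ ∃ x, 4 ≤ G'.degree x ∧ G'.degree x + 1 ≤ c ∧
      (c+1) * G'.degree x + 4
          + 3 * ((G'.neighborFinset x).filter (fun u => G'.degree u = 2)).card
        ≤ c * ((G'.neighborFinset x).filter (fun u => G'.degree u = 2)).card + 4*c) :
    (4*(c:ℚ)-4) * s.card + 1 ≤ ((c:ℚ)+1) * ∑ v ∈ s, (G'.degree v : ℚ) := by
  classical
  push_neg at hR1 hR2 hR3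
  set t : V → ℕ := fun v => ((G'.neighborFinset v).filter (fun u => G'.degree u = 2)).card
    with ht
  have hdeg24 : ∀ v ∈ s, G'.degree v = 2 ∨ 4 ≤ G'.degree v := by
    intro v hv
    have h1 := (hR1 v hv).1
    have h2 : G'.degree v % 2 = 1 → c ≤ 2 * G'.degree v :=
      fun h => (hR1 v hv).2 (Nat.odd_iff.mpr h)
    omega
  have ht0 : ∀ v, G'.degree v = 2 → t v = 0 := by
    intro v h2
    rw [ht]
    rw [Finset.card_eq_zero, Finset.filter_eq_empty_iff]
    intro u hu
    exact hR2 v u ((SimpleGraph.mem_neighborFinset _ _ _).mp hu) h2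
  have htle : ∀ v, t v ≤ G'.degree v := by
    intro v
    rw [ht, ← SimpleGraph.card_neighborFinset_eq_degree]
    exact Finset.card_filter_le _ _
  set g : V → ℚ := fun v => ((c:ℚ)+1) * (G'.degree v : ℚ) - (4*(c:ℚ)-4)
      - ((c:ℚ)-3) * (t v : ℚ)
      + (if G'.degree v = 2 then ((c:ℚ)-3) * (G'.degree v : ℚ) else 0) with hg
  have hc7 : (7:ℚ) ≤ (c:ℚ) := by exact_mod_cast hc
  have hg0 : ∀ v ∈ s, 0 ≤ g v ∧ (4 ≤ G'.degree v → 1 ≤ g v) := by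
    intro v hv
    rcases hdeg24 v hv with h2 | h4
    · have hgv : g v = 0 := by
        rw [hg]
        simp only [h2, ht0 v h2, if_pos]
        push_cast
        ring
      rw [hgv]
      exact ⟨le_refl _, fun h => absurd h (by omega)⟩
    · have hite : (if G'.degree v = 2 then ((c:ℚ)-3) * (G'.degree v : ℚ) else 0) = 0 :=
        if_neg (by omega)
      have hd4 : (4:ℚ) ≤ (G'.degree v : ℚ) := by exact_mod_cast h4
      have hgood : 1 ≤ g v := by
        rw [hg]
        simp only [hite, add_zero]
        by_cases hdc : G'.degree v + 1 ≤ c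
        · have h3 := hR3 v h4 hdc
          have h3' : (c:ℚ) * (t v : ℚ) + 4*(c:ℚ) + 1 ≤ ((c:ℚ)+1) * (G'.degree v : ℚ) + 4
              + 3 * (t v : ℚ) := by exact_mod_cast h3
          linarith
        · have hcd : (c:ℚ) ≤ (G'.degree v : ℚ) := by exact_mod_cast (by omega : c ≤ G'.degree v)
          have htled : (t v : ℚ) ≤ (G'.degree v : ℚ) := by exact_mod_cast htle v
          nlinarith
      exact ⟨le_trans (by norm_num) hgood, fun _ => hgood⟩
  have hdc := dc G' s hmem
  have hX : ∑ v ∈ s, ((c:ℚ)-3) * (t v : ℚ)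
      = ∑ v ∈ s, (if G'.degree v = 2 then ((c:ℚ)-3) * (G'.degree v : ℚ) else 0) := by
    rw [← Finset.mul_sum]
    have hcast : (∑ v ∈ s, (t v : ℚ)) = ∑ v ∈ s, (if G'.degree v = 2 then (G'.degree v : ℚ) else 0) := by
      have h := congrArg (Nat.cast : ℕ → ℚ) hdc
      push_cast at h
      exact h
    rw [hcast, Finset.mul_sum]
    refine Finset.sum_congr rfl ?_
    intro v _
    by_cases h2 : G'.degree v = 2 <;> simp [h2]
  have hsumg : ∑ v ∈ s, g v
      = ((c:ℚ)+1) * (∑ v ∈ s, (G'.degree v : ℚ)) - (4*(c:ℚ)-4) * s.card := by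
    rw [hg]
    rw [Finset.sum_add_distrib, Finset.sum_sub_distrib, Finset.sum_sub_distrib]
    rw [← hX, ← Finset.mul_sum, ← Finset.mul_sum, Finset.sum_const, nsmul_eq_mul]
    ring
  have hbig : ∃ w ∈ s, 4 ≤ G'.degree w := by
    obtain ⟨p, q, hpq⟩ := hedge
    have hps : p ∈ s := hmem p q hpq
    have hqs : q ∈ s := hmem q p hpq.symm
    have hdp : 1 ≤ G'.degree p := by
      rw [← SimpleGraph.card_neighborFinset_eq_degree]
      exact Finset.card_pos.mpr ⟨q, (SimpleGraph.mem_neighborFinset _ _ _).mpr hpq⟩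
    rcases hdeg24 p hps with h2 | h4
    · rcases hdeg24 q hqs with h2' | h4'
      · exact absurd h2' (hR2 p q hpq h2)
      · exact ⟨q, hqs, h4'⟩
    · exact ⟨p, hps, h4⟩
  obtain ⟨w, hws, hw4⟩ := hbig
  have h1le : (1:ℚ) ≤ ∑ v ∈ s, g v := by
    have := Finset.single_le_sum (f := g) (fun i hi => (hg0 i hi).1) hws
    have h2 := (hg0 w hws).2 hw4
    linarith
  rw [hsumg] at h1le
  linarith

end Counting

lemma arithT1 {c d t : ℕ} (hc : 7 ≤ c) (h4 : 4 ≤ d)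
    (h : (c+1)*d + 4 + 3*t ≤ c*t + 4*c) : 1 ≤ t := by
  by_contra ht
  have ht0 : t = 0 := by omega
  subst ht0
  have h4' : (c+1)*4 ≤ (c+1)*d := Nat.mul_le_mul_left _ h4
  omega

lemma arithR3 {c d t : ℕ} (hc : 7 ≤ c) (h4 : 4 ≤ d) (hdc : d + 1 ≤ c)
    (h : (c+1)*d + 4 + 3*t ≤ c*t + 4*c) : 2*d < c + t := by
  zify at *
  nlinarith [mul_nonneg (by linarith : (0:ℤ) ≤ (c:ℤ) - 7) (by linarith : (0:ℤ) ≤ (c:ℤ) - 1 - d),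
    mul_nonneg (by linarith : (0:ℤ) ≤ (c:ℤ) - 7) (by linarith : (0:ℤ) ≤ (c:ℤ) - d)]

lemma key (G : SimpleGraph V) {c : ℕ} (hc : 7 ≤ c)
    (hmad : MadLE G ((4 * c - 4) / (c + 1))) :
    ∀ (n : ℕ) (s : Finset V), s.card ≤ n → ∃ φ : V → Fin c, IsOddColoring (rg G s) φ := by
  classical
  intro n
  induction n with
  | zero =>
    intro s hs
    refine ⟨fun _ => ⟨0, by omega⟩, ?_, ?_⟩
    · intro u v h
      have : u ∈ s := h.2.1
      simp [Finset.card_eq_zero.mp (Nat.le_zero.mp hs)] at this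
    · intro v hv
      exfalso
      obtain ⟨u, hu⟩ := hv
      have : u ∈ s := hu.2.2
      simp [Finset.card_eq_zero.mp (Nat.le_zero.mp hs)] at this
  | succ n ih =>
    intro s hs
    by_cases hedge : ∃ p q, (rg G s).Adj p q
    · obtain ⟨p₀, q₀, hpq₀⟩ := hedge
      by_cases hR1 : ∃ v ∈ s, (rg G s).degree v = 0
          ∨ (Odd ((rg G s).degree v) ∧ 2 * (rg G s).degree v < c)
      · -- reduction R1 : remove a vertex of degree 0 or small odd degree
        obtain ⟨v, hvs, hv⟩ := hR1
        obtain ⟨ψ, hψ⟩ := ih (s.erase v) (by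
          have := Finset.card_erase_of_mem hvs; omega)
        have h2d : 2 * (rg G s).degree v < c := by
          rcases hv with h | h
          · omega
          · exact h.2
        refine master (rg G s) {v} ψ hψ ?_ [v] (by simp) (by simp) ?_ ?_
        · intro p q
          rw [rg_adj, rg_adj, Finset.mem_erase, Finset.mem_erase, Finset.mem_singleton,
            Finset.mem_singleton]
          tauto
        · intro w T' hsuf
          obtain ⟨pre, hpre⟩ := hsuf
          have hwv : w = v ∧ T' = [] := by
            cases pre with
            | nil => simpa using hpre
            | cons a l =>
              exfalso
              have := congrArg List.length hpre
              simp only [List.length_append, List.length_cons, List.length_nil] at this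
              omega
          obtain ⟨rfl, rfl⟩ := hwv
          have hb1 : (((rg G s).neighborFinset w).filter
              (fun q => q ∉ (List.nil : List V).toFinset)).card ≤ (rg G s).degree w := by
            rw [← SimpleGraph.card_neighborFinset_eq_degree]
            exact Finset.card_filter_le _ _
          have hb2 : (((rg G s).neighborFinset w).filter
              (fun p => (rg G s).neighborFinset p ∩ (List.nil : List V).toFinset = ∅)).card
              ≤ (rg G s).degree w := by
            rw [← SimpleGraph.card_neighborFinset_eq_degree]
            exact Finset.card_filter_le _ _
          omega
        · intro w hw
          rw [Finset.mem_singleton] at hw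
          subst hw
          rcases hv with h | h
          · right; right
            rw [← Finset.card_eq_zero, SimpleGraph.card_neighborFinset_eq_degree]
            exact h
          · right; left
            rw [SimpleGraph.card_neighborFinset_eq_degree]
            exact h.1
      · by_cases hR2 : ∃ u w, (rg G s).Adj u w ∧ (rg G s).degree u = 2 ∧ (rg G s).degree w = 2
        · -- reduction R2 : remove two adjacent 2-vertices
          obtain ⟨u, w, huw, hu2, hw2⟩ := hR2
          have hus : u ∈ s := huw.2.1
          have hws : w ∈ s := huw.2.2
          have hne : u ≠ w := (rg G s).ne_of_adj huw
          obtain ⟨ψ, hψ⟩ := ih (s \ {u, w}) (by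
            have hsub : s \ {u, w} ⊆ s.erase u := by
              intro x hx
              rw [Finset.mem_sdiff, Finset.mem_insert, Finset.mem_singleton] at hx
              rw [Finset.mem_erase]
              exact ⟨fun h => hx.2 (Or.inl h), hx.1⟩
            have h1 := Finset.card_le_card hsub
            have h2 := Finset.card_erase_of_mem hus
            omega)
          refine master (rg G s) {u, w} ψ hψ ?_ [u, w] (by simp [hne]) (by simp) ?_ ?_
          · intro p q
            rw [rg_adj, rg_adj, Finset.mem_sdiff, Finset.mem_sdiff, Finset.mem_insert,
              Finset.mem_insert, Finset.mem_singleton, Finset.mem_singleton]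
            tauto
          · intro v' T' hsuf
            obtain ⟨pre, hpre⟩ := hsuf
            have hcase : (v' = u ∧ T' = [w]) ∨ (v' = w ∧ T' = []) := by
              cases pre with
              | nil => exact Or.inl (by simpa using hpre)
              | cons a l =>
                cases l with
                | nil =>
                  have h' : a = u ∧ v' = w ∧ T' = [] := by simpa using hpre
                  exact Or.inr ⟨h'.2.1, h'.2.2⟩
                | cons b l' =>
                  exfalso
                  have := congrArg List.length hpre
                  simp only [List.length_append, List.length_cons, List.length_nil] at this
                  omega
            have hbgen : ∀ (z : V) (T'' : List V), (rg G s).degree z = 2 →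
                (((rg G s).neighborFinset z).filter (fun q => q ∉ T''.toFinset)).card
                + (((rg G s).neighborFinset z).filter
                    (fun p => (rg G s).neighborFinset p ∩ T''.toFinset = ∅)).card < c := by
              intro z T'' hz2
              have hb1 : (((rg G s).neighborFinset z).filter
                  (fun q => q ∉ T''.toFinset)).card ≤ (rg G s).degree z := by
                rw [← SimpleGraph.card_neighborFinset_eq_degree]
                exact Finset.card_filter_le _ _
              have hb2 : (((rg G s).neighborFinset z).filter
                  (fun p => (rg G s).neighborFinset p ∩ T''.toFinset = ∅)).card
                  ≤ (rg G s).degree z := by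
                rw [← SimpleGraph.card_neighborFinset_eq_degree]
                exact Finset.card_filter_le _ _
              omega
            rcases hcase with ⟨rfl, rfl⟩ | ⟨rfl, rfl⟩
            · exact hbgen _ _ hu2
            · exact hbgen _ _ hw2
          · intro v' hv'
            rw [Finset.mem_insert, Finset.mem_singleton] at hv'
            rcases hv' with rfl | rfl
            · exact Or.inl ⟨w, by simp, huw⟩
            · exact Or.inl ⟨u, by simp, huw.symm⟩
        · by_cases hR3 : ∃ x, 4 ≤ (rg G s).degree x ∧ (rg G s).degree x + 1 ≤ c ∧
              (c+1) * (rg G s).degree x + 4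
                + 3 * (((rg G s).neighborFinset x).filter
                    (fun u => (rg G s).degree u = 2)).card
              ≤ c * (((rg G s).neighborFinset x).filter
                    (fun u => (rg G s).degree u = 2)).card + 4*c
          · -- reduction R3
            obtain ⟨x, hx4, hxc, hineq⟩ := hR3
            set S : Finset V := ((rg G s).neighborFinset x).filter
                (fun u => (rg G s).degree u = 2) with hS
            have hSsub : S ⊆ (rg G s).neighborFinset x := Finset.filter_subset _ _
            have hxnotS : x ∉ S := fun h =>
              (rg G s).loopless.irrefl x ((SimpleGraph.mem_neighborFinset _ _ _).mp (hSsub h))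
            have hxs : x ∈ s := by
              have h0 : 0 < ((rg G s).neighborFinset x).card := by
                rw [SimpleGraph.card_neighborFinset_eq_degree]; omega
              obtain ⟨u, hu⟩ := Finset.card_pos.mp h0
              exact ((SimpleGraph.mem_neighborFinset _ _ _).mp hu).2.1
            have hSs : S ⊆ s := fun u hu =>
              ((SimpleGraph.mem_neighborFinset _ _ _).mp (hSsub hu)).2.2
            have htcard : S.card ≤ (rg G s).degree x := by
              rw [← SimpleGraph.card_neighborFinset_eq_degree]
              exact Finset.card_filter_le _ _
            have ht1 : 1 ≤ S.card := arithT1 hc hx4 hineq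
            have h2dt : 2 * (rg G s).degree x < c + S.card := arithR3 hc hx4 hxc hineq
            obtain ⟨ψ, hψ⟩ := ih (s \ insert x S) (by
              have hsub : s \ insert x S ⊆ s.erase x := by
                intro z hz
                rw [Finset.mem_sdiff, Finset.mem_insert] at hz
                rw [Finset.mem_erase]
                exact ⟨fun h => hz.2 (Or.inl h), hz.1⟩
              have h1 := Finset.card_le_card hsub
              have h2 := Finset.card_erase_of_mem hxs
              omega)
            refine master (rg G s) (insert x S) ψ hψ ?_ (x :: S.toList)
              (List.nodup_cons.mpr ⟨by simpa [Finset.mem_toList] using hxnotS,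
                Finset.nodup_toList S⟩)
              (by rw [List.toFinset_cons, Finset.toList_toFinset]) ?_ ?_
            · intro p q
              rw [rg_adj, rg_adj, Finset.mem_sdiff, Finset.mem_sdiff]
              tauto
            · intro v' T' hsuf
              obtain ⟨pre, hpre⟩ := hsuf
              cases pre with
              | nil =>
                have hv'x : v' = x ∧ T' = S.toList := by simpa using hpre
                obtain ⟨rfl, rfl⟩ := hv'x
                rw [Finset.toList_toFinset]
                have hb1 : (((rg G s).neighborFinset v').filter (fun q => q ∉ S)).card
                    = (rg G s).degree v' - S.card := by
                  rw [show ((rg G s).neighborFinset v').filter (fun q => q ∉ S)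
                      = (rg G s).neighborFinset v' \ S from
                    (Finset.sdiff_eq_filter _ _).symm]
                  rw [Finset.card_sdiff_of_subset hSsub, SimpleGraph.card_neighborFinset_eq_degree]
                have hb2 : (((rg G s).neighborFinset v').filter
                    (fun p => (rg G s).neighborFinset p ∩ S = ∅)).card
                    ≤ (rg G s).degree v' := by
                  rw [← SimpleGraph.card_neighborFinset_eq_degree]
                  exact Finset.card_filter_le _ _
                omega
              | cons a pre' =>
                have hinj := List.cons.inj hpre
                have hv'S : v' ∈ S := by
                  rw [← Finset.mem_toList, ← hinj.2]
                  exact List.mem_append.mpr (Or.inr List.mem_cons_self)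
                have hd2 : (rg G s).degree v' = 2 := (Finset.mem_filter.mp hv'S).2
                have hb1 : (((rg G s).neighborFinset v').filter
                    (fun q => q ∉ T'.toFinset)).card ≤ (rg G s).degree v' := by
                  rw [← SimpleGraph.card_neighborFinset_eq_degree]
                  exact Finset.card_filter_le _ _
                have hb2 : (((rg G s).neighborFinset v').filter
                    (fun p => (rg G s).neighborFinset p ∩ T'.toFinset = ∅)).card
                    ≤ (rg G s).degree v' := by
                  rw [← SimpleGraph.card_neighborFinset_eq_degree]
                  exact Finset.card_filter_le _ _
                omega
            · intro v' hv'
              rw [Finset.mem_insert] at hv'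
              rcases hv' with rfl | hv'S
              · obtain ⟨u, hu⟩ := Finset.card_pos.mp ht1
                exact Or.inl ⟨u, Finset.mem_insert_of_mem hu,
                  (SimpleGraph.mem_neighborFinset _ _ _).mp (hSsub hu)⟩
              · exact Or.inl ⟨x, Finset.mem_insert_self _ _,
                  ((SimpleGraph.mem_neighborFinset _ _ _).mp (hSsub hv'S)).symm⟩
          · -- no reduction: contradiction with mad bound
            exfalso
            have hsne : s.Nonempty := ⟨p₀, hpq₀.2.1⟩
            have h1 := sum_deg_le G hmad s hsne
            have h2 := discharge hc (rg G s) s (fun u v h => h.2.1) ⟨p₀, q₀, hpq₀⟩ hR1 hR2 hR3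
            linarith
    · -- no edges at all
      push_neg at hedge
      refine ⟨fun _ => ⟨0, by omega⟩, ?_, ?_⟩
      · intro u v h
        exact absurd h (hedge u v)
      · intro v hv
        exfalso
        obtain ⟨u, hu⟩ := hv
        exact hedge v u hu

end CranstonAux


/-- Cranston's conjecture for `c ≥ 7`: every graph `G` with `mad(G) ≤ (4c-4)/(c+1)`
has an odd `c`-coloring. -/
theorem stmt_9 {V : Type*} [Fintype V] (G : SimpleGraph V) (c : ℕ) (hc : 7 ≤ c)
    (hmad : MadLE G ((4 * c - 4) / (c + 1))) :
    HasOddColoring G c := by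
  classical
  obtain ⟨φ, hφ⟩ := CranstonAux.key G hc hmad (Finset.univ.card) Finset.univ le_rfl
  have hG : CranstonAux.rg G Finset.univ = G := by
    ext u v
    rw [CranstonAux.rg_adj]
    simp
  rw [hG] at hφ
  exact ⟨φ, hφ⟩
end

section
/- For c ∈ {3,4}, every graph G with mad(G) < 2 has an odd c-coloring. Moreover, the bound cannot be relaxed to mad(G) ≤ 2 when c = 4, as witnessed by the 5-cycle. -/
open SimpleGraph


lemma exists_small {V : Type} [Fintype V] [Nonempty V] (G : SimpleGraph V)
    (h : MadLT G 2) : ∃ v, (G.neighborSet v).ncard ≤ 1 := by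
  classical
  by_contra hcon
  push_neg at hcon
  have htop := h ⊤ (by rw [Subgraph.verts_top]; exact Set.univ_nonempty)
  rw [Subgraph.verts_top, Subgraph.edgeSet_top, Set.ncard_univ, Nat.card_eq_fintype_card] at htop
  have hlt : G.edgeSet.ncard < Fintype.card V := by
    have : (G.edgeSet.ncard : ℚ) < Fintype.card V := by linarith
    exact_mod_cast this
  have hdeg : ∀ v, 2 ≤ G.degree v := by
    intro v
    have h1 := hcon v
    rwa [← Nat.card_coe_set_eq, Nat.card_eq_fintype_card, card_neighborSet_eq_degree] at h1
  have hsum : 2 * Fintype.card V ≤ ∑ v, G.degree v := by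
    calc 2 * Fintype.card V = ∑ _v : V, 2 := by simp [mul_comm]
    _ ≤ ∑ v, G.degree v := Finset.sum_le_sum fun v _ => hdeg v
  rw [sum_degrees_eq_twice_card_edges] at hsum
  have hE : G.edgeFinset.card = G.edgeSet.ncard := by
    rw [← coe_edgeFinset, Set.ncard_coe_finset]
  omega

lemma madlt_comap {V : Type} (G : SimpleGraph V) (v : V) (h : MadLT G 2) :
    MadLT (G.comap (Subtype.val : {w : V // w ≠ v} → V)) 2 := by
  intro H' hne'
  set H : G.Subgraph :=
    { verts := Subtype.val '' H'.verts
      Adj := fun a b => ∃ (ha : a ≠ v) (hb : b ≠ v), H'.Adj ⟨a, ha⟩ ⟨b, hb⟩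
      adj_sub := by rintro a b ⟨ha, hb, hadj⟩; exact H'.adj_sub hadj
      edge_vert := by rintro a b ⟨ha, hb, hadj⟩; exact ⟨⟨a, ha⟩, H'.edge_vert hadj, rfl⟩
      symm := ⟨by rintro a b ⟨ha, hb, hadj⟩; exact ⟨hb, ha, hadj.symm⟩⟩ } with hH
  have hverts : H.verts.ncard = H'.verts.ncard :=
    Set.ncard_image_of_injective _ Subtype.val_injective
  have hedge : H.edgeSet = Sym2.map Subtype.val '' H'.edgeSet := by
    ext e
    induction e with
    | h a b =>
      simp only [Subgraph.mem_edgeSet]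
      constructor
      · rintro ⟨ha, hb, hadj⟩
        exact ⟨s(⟨a, ha⟩, ⟨b, hb⟩), hadj, rfl⟩
      · rintro ⟨e', he', hmap⟩
        induction e' with
        | h x y =>
          rw [Sym2.map_pair_eq, Sym2.eq_iff] at hmap
          rcases hmap with ⟨hxa, hyb⟩ | ⟨hxb, hya⟩
          · subst hxa; subst hyb
            exact ⟨x.2, y.2, by simpa using he'⟩
          · subst hxb; subst hya
            exact ⟨y.2, x.2, by simpa using he'.symm⟩
  have hecard : H.edgeSet.ncard = H'.edgeSet.ncard := by
    rw [hedge]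
    exact Set.ncard_image_of_injective _ (Sym2.map.injective Subtype.val_injective)
  obtain ⟨x, hx⟩ := hne'
  have := h H ⟨x.val, ⟨x, hx, rfl⟩⟩
  rwa [hverts, hecard] at this

lemma extend_coloring {V : Type} [Fintype V] {c : ℕ} (hc : 3 ≤ c) (G : SimpleGraph V) (v : V)
    (hdeg : (G.neighborSet v).ncard ≤ 1)
    (φ' : {w : V // w ≠ v} → Fin c)
    (h' : IsOddColoring (G.comap (Subtype.val : {w : V // w ≠ v} → V)) φ') :
    HasOddColoring G c := by
  classical
  set G' : SimpleGraph {w : V // w ≠ v} := G.comap Subtype.val with hG'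
  have hG'adj : ∀ (a b : {w : V // w ≠ v}), G'.Adj a b ↔ G.Adj a.val b.val := fun a b => Iff.rfl
  have hne_trans : ∀ (w : V) (hw : w ≠ v), ¬ G.Adj w v →
      (G.neighborSet w).Nonempty → (G'.neighborSet ⟨w, hw⟩).Nonempty := by
    rintro w hw hnadj ⟨u, hu⟩
    have huv : u ≠ v := fun h => hnadj (h ▸ hu)
    exact ⟨⟨u, huv⟩, hu⟩
  -- choose the colors depending on the degree of v
  rcases (Set.ncard_le_one_iff_eq (Set.toFinite _)).1 hdeg with hempty | ⟨u0, hu0⟩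
  · -- v is isolated
    have hno : ∀ u, ¬ G.Adj v u := by
      intro u hu
      have : u ∈ G.neighborSet v := hu
      rw [hempty] at this
      exact this
    set φ : V → Fin c := fun w => if h : w = v then ⟨0, by omega⟩ else φ' ⟨w, h⟩ with hφdef
    have hφne : ∀ (w : V) (hw : w ≠ v), φ w = φ' ⟨w, hw⟩ := by
      intro w hw; rw [hφdef]; exact dif_neg hw
    have key : ∀ (w : V) (hw : w ≠ v) (k : Fin c),
        (∀ u, G.Adj w u → φ u = k → u ≠ v) →
        {u | G.Adj w u ∧ φ u = k}.ncard = {u | G'.Adj ⟨w, hw⟩ u ∧ φ' u = k}.ncard := by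
      intro w hw k hyp
      have hset : {u | G.Adj w u ∧ φ u = k}
          = Subtype.val '' {u | G'.Adj ⟨w, hw⟩ u ∧ φ' u = k} := by
        ext u
        constructor
        · rintro ⟨hadj, hcol⟩
          have hu : u ≠ v := hyp u hadj hcol
          rw [hφne u hu] at hcol
          exact ⟨⟨u, hu⟩, ⟨hadj, hcol⟩, rfl⟩
        · rintro ⟨u', ⟨hadj, hcol⟩, rfl⟩
          exact ⟨hadj, by rw [hφne u'.val u'.2]; simpa using hcol⟩
      rw [hset, Set.ncard_image_of_injective _ Subtype.val_injective]
    refine ⟨φ, ?_, ?_⟩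
    · intro a b hadj heq
      have ha : a ≠ v := fun h => hno b (h ▸ hadj)
      have hb : b ≠ v := fun h => hno a (h ▸ hadj.symm)
      rw [hφne a ha, hφne b hb] at heq
      exact h'.1 ((hG'adj ⟨a, ha⟩ ⟨b, hb⟩).2 hadj) heq
    · intro w hwne
      have hw : w ≠ v := by
        rintro rfl
        obtain ⟨u, hu⟩ := hwne
        exact hno u hu
      have hnadj : ¬ G.Adj w v := fun h => hno w h.symm
      obtain ⟨k, hk⟩ := h'.2 ⟨w, hw⟩ (hne_trans w hw hnadj hwne)
      refine ⟨k, ?_⟩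
      rw [key w hw k (fun u hadj _ hu => hnadj (hu ▸ hadj))]
      exact hk
  · -- v has a unique neighbor u0
    have hadj0 : G.Adj v u0 := by
      have : u0 ∈ G.neighborSet v := by rw [hu0]; rfl
      exact this
    have huniq : ∀ u, G.Adj v u → u = u0 := by
      intro u hu
      have : u ∈ G.neighborSet v := hu
      rwa [hu0] at this
    have hu0v : u0 ≠ v := fun h => G.loopless.irrefl v (h ▸ hadj0)
    set u0' : {w : V // w ≠ v} := ⟨u0, hu0v⟩ with hu0'
    set k1 : Fin c :=
      if h : (G'.neighborSet u0').Nonempty then (h'.2 u0' h).choose else φ' u0' with hk1def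
    obtain ⟨k0, hk0a, hk0b⟩ : ∃ k : Fin c, k ≠ φ' u0' ∧ k ≠ k1 := by
      by_contra hcon
      push_neg at hcon
      have hsub : (Finset.univ : Finset (Fin c)) ⊆ {φ' u0', k1} := by
        intro k _
        rcases em (k = φ' u0') with h | h
        · simp [h]
        · simp [hcon k h]
      have h1 := Finset.card_le_card hsub
      have h2 : ({φ' u0', k1} : Finset (Fin c)).card ≤ 2 :=
        le_trans (Finset.card_insert_le _ _) (by simp)
      simp only [Finset.card_univ, Fintype.card_fin] at h1
      omega
    set φ : V → Fin c := fun w => if h : w = v then k0 else φ' ⟨w, h⟩ with hφdef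
    have hφne : ∀ (w : V) (hw : w ≠ v), φ w = φ' ⟨w, hw⟩ := by
      intro w hw; rw [hφdef]; exact dif_neg hw
    have hφv : φ v = k0 := by rw [hφdef]; exact dif_pos rfl
    have key : ∀ (w : V) (hw : w ≠ v) (k : Fin c),
        (∀ u, G.Adj w u → φ u = k → u ≠ v) →
        {u | G.Adj w u ∧ φ u = k}.ncard = {u | G'.Adj ⟨w, hw⟩ u ∧ φ' u = k}.ncard := by
      intro w hw k hyp
      have hset : {u | G.Adj w u ∧ φ u = k}
          = Subtype.val '' {u | G'.Adj ⟨w, hw⟩ u ∧ φ' u = k} := by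
        ext u
        constructor
        · rintro ⟨hadj, hcol⟩
          have hu : u ≠ v := hyp u hadj hcol
          rw [hφne u hu] at hcol
          exact ⟨⟨u, hu⟩, ⟨hadj, hcol⟩, rfl⟩
        · rintro ⟨u', ⟨hadj, hcol⟩, rfl⟩
          exact ⟨hadj, by rw [hφne u'.val u'.2]; simpa using hcol⟩
      rw [hset, Set.ncard_image_of_injective _ Subtype.val_injective]
    refine ⟨φ, ?_, ?_⟩
    · intro a b hadj heq
      by_cases ha : a = v
      · have hb : b = u0 := huniq b (ha ▸ hadj)
        rw [ha, hb, hφv, hφne u0 hu0v] at heq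
        exact hk0a heq
      · by_cases hb : b = v
        · have ha' : a = u0 := huniq a (hb ▸ hadj.symm)
          rw [ha', hb, hφv, hφne u0 hu0v] at heq
          exact hk0a heq.symm
        · rw [hφne a ha, hφne b hb] at heq
          exact h'.1 ((hG'adj ⟨a, ha⟩ ⟨b, hb⟩).2 hadj) heq
    · intro w hwne
      by_cases hwv : w = v
      · refine ⟨φ' u0', ?_⟩
        have hset : {u | G.Adj w u ∧ φ u = φ' u0'} = {u0} := by
          ext u
          constructor
          · rintro ⟨hadj, _⟩
            exact huniq u (hwv ▸ hadj)
          · rintro rfl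
            exact ⟨hwv ▸ hadj0, hφne _ hu0v⟩
        rw [hset, Set.ncard_singleton]
        exact odd_one
      · by_cases hwu0 : w = u0
        · by_cases hG'ne : (G'.neighborSet u0').Nonempty
          · refine ⟨k1, ?_⟩
            have hk1 : Odd {u | G'.Adj u0' u ∧ φ' u = k1}.ncard := by
              rw [hk1def, dif_pos hG'ne]
              exact (h'.2 u0' hG'ne).choose_spec
            have hyp : ∀ u, G.Adj w u → φ u = k1 → u ≠ v := by
              intro u hadj hcol hu
              rw [hu, hφv] at hcol
              exact hk0b hcol
            rw [key w hwv k1 hyp]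
            have : (⟨w, hwv⟩ : {x : V // x ≠ v}) = u0' := by
              rw [hu0']; exact Subtype.ext hwu0
            rw [this]
            exact hk1
          · refine ⟨k0, ?_⟩
            have hset : {u | G.Adj w u ∧ φ u = k0} = {v} := by
              ext u
              constructor
              · rintro ⟨hadj, hcol⟩
                by_contra hu
                refine hG'ne ⟨⟨u, hu⟩, ?_⟩
                show G.Adj u0 u
                exact hwu0 ▸ hadj
              · rintro rfl
                refine ⟨?_, hφv⟩
                rw [hwu0]
                exact hadj0.symm
            rw [hset, Set.ncard_singleton]
            exact odd_one
        · have hnadj : ¬ G.Adj w v := fun h => hwu0 (huniq w h.symm)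
          obtain ⟨k, hk⟩ := h'.2 ⟨w, hwv⟩ (hne_trans w hwv hnadj hwne)
          refine ⟨k, ?_⟩
          rw [key w hwv k (fun u hadj _ hu => hnadj (hu ▸ hadj))]
          exact hk

lemma main_lemma : ∀ (n : ℕ) (V : Type) [Fintype V] (G : SimpleGraph V) (c : ℕ),
    3 ≤ c → Fintype.card V ≤ n → MadLT G 2 → HasOddColoring G c := by
  intro n
  induction n with
  | zero =>
    intro V _ G c hc hcard _
    have : IsEmpty V := Fintype.card_eq_zero_iff.mp (Nat.le_antisymm hcard (Nat.zero_le _))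
    exact ⟨fun w => isEmptyElim w, fun a b hadj => isEmptyElim a, fun w => isEmptyElim w⟩
  | succ n ih =>
    intro V _ G c hc hcard hmad
    classical
    by_cases hV : IsEmpty V
    · exact ⟨fun w => isEmptyElim w, fun a b hadj => isEmptyElim a, fun w => isEmptyElim w⟩
    · have : Nonempty V := not_isEmpty_iff.mp hV
      obtain ⟨v, hv⟩ := exists_small G hmad
      have hmad' := madlt_comap G v hmad
      have hcard' : Fintype.card {w : V // w ≠ v} ≤ n := by
        have hlt : Fintype.card {w : V // w ≠ v} < Fintype.card V :=
          Fintype.card_subtype_lt (x := v) (by simp)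
        omega
      obtain ⟨φ', hφ'⟩ := ih {w : V // w ≠ v} (G.comap Subtype.val) c hc hcard' hmad'
      exact extend_coloring hc G v hv φ' hφ'

lemma madle_C5 : MadLE (SimpleGraph.cycleGraph 5) 2 := by
  intro H _
  have key : H.edgeSet.ncard ≤ H.verts.ncard := by
    classical
    set f : Sym2 (Fin 5) → Fin 5 :=
      fun e => if h : ∃ i : Fin 5, e = s(i, i + 1) then h.choose else 0 with hf
    have hrep : ∀ e ∈ H.edgeSet, e = s(f e, f e + 1) := by
      intro e he
      have he' : e ∈ (cycleGraph 5).edgeSet := H.edgeSet_subset he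
      have : ∃ i : Fin 5, e = s(i, i + 1) := by
        induction e with
        | h a b =>
          rw [mem_edgeSet] at he'
          exact (by decide : ∀ a b : Fin 5, (cycleGraph 5).Adj a b →
            ∃ i : Fin 5, s(a, b) = s(i, i + 1)) a b he'
      simp only [hf, dif_pos this]
      exact this.choose_spec
    have hmem : ∀ e ∈ H.edgeSet, f e ∈ H.verts := by
      intro e he
      have := hrep e he
      rw [this, SimpleGraph.Subgraph.mem_edgeSet] at he
      exact H.edge_vert he
    have hinj : Set.InjOn f H.edgeSet := by
      intro e1 h1 e2 h2 hfe
      rw [hrep e1 h1, hrep e2 h2, hfe]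
    exact Set.ncard_le_ncard_of_injOn f hmem hinj H.verts.toFinite
  have : (H.edgeSet.ncard : ℚ) ≤ (H.verts.ncard : ℚ) := by exact_mod_cast key
  linarith

-- part 3 auxiliary
lemma parity_pair (φ : Fin 5 → Fin 4) (a b : Fin 5) (hab : a ≠ b) (h : φ a = φ b) (k : Fin 4)
    (hodd : Odd {u | (u = a ∨ u = b) ∧ φ u = k}.ncard) : False := by
  by_cases hk : φ a = k
  · have hset : {u | (u = a ∨ u = b) ∧ φ u = k} = {a, b} := by
      ext u
      constructor
      · rintro ⟨h1 | h1, _⟩ <;> simp [h1]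
      · rintro (rfl | rfl)
        · exact ⟨Or.inl rfl, hk⟩
        · exact ⟨Or.inr rfl, h ▸ hk⟩
    rw [hset, Set.ncard_pair hab] at hodd
    simp [Nat.odd_iff] at hodd
  · have hset : {u | (u = a ∨ u = b) ∧ φ u = k} = ∅ := by
      ext u
      simp only [Set.mem_setOf_eq, Set.mem_empty_iff_false, iff_false, not_and]
      rintro (rfl | rfl)
      · exact hk
      · exact fun hh => hk (h.trans hh)
    rw [hset] at hodd
    simp at hodd

lemma no_odd_C5 : ¬ HasOddColoring (SimpleGraph.cycleGraph 5) 4 := by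
  rintro ⟨φ, h1, h2⟩
  have hadj : ∀ v u : Fin 5, (cycleGraph 5).Adj v u ↔ (u = v - 1 ∨ u = v + 1) := by decide
  have d2 : ∀ v : Fin 5, φ (v - 1) ≠ φ (v + 1) := by
    intro v heq
    obtain ⟨k, hk⟩ := h2 v ⟨v + 1, (hadj v (v + 1)).2 (Or.inr rfl)⟩
    have : {u | (cycleGraph 5).Adj v u ∧ φ u = k} = {u | (u = v - 1 ∨ u = v + 1) ∧ φ u = k} := by
      ext u; rw [Set.mem_setOf_eq, Set.mem_setOf_eq, hadj]
    rw [this] at hk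
    exact parity_pair φ (v - 1) (v + 1) ((by decide : ∀ v : Fin 5, v - 1 ≠ v + 1) v) heq k hk
  have e01 : φ 0 ≠ φ 1 := h1 (by decide)
  have e12 : φ 1 ≠ φ 2 := h1 (by decide)
  have e23 : φ 2 ≠ φ 3 := h1 (by decide)
  have e34 : φ 3 ≠ φ 4 := h1 (by decide)
  have e04 : φ 0 ≠ φ 4 := h1 (by decide)
  have e02 : φ 0 ≠ φ 2 := by simpa using d2 1
  have e13 : φ 1 ≠ φ 3 := by simpa using d2 2
  have e24 : φ 2 ≠ φ 4 := by simpa using d2 3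
  have e03 : φ 0 ≠ φ 3 := by simpa using (d2 4).symm
  have e14 : φ 1 ≠ φ 4 := fun h => d2 0 h.symm
  have hinj : Function.Injective φ := by
    intro a b hab
    fin_cases a <;> fin_cases b <;>
      first
        | rfl
        | (exfalso; simp_all)
  have := Fintype.card_le_of_injective φ hinj
  simp at this

/-- For `c ∈ {3, 4}`, every graph `G` with `mad(G) < 2` has an odd `c`-coloring;
moreover the bound cannot be relaxed to `mad(G) ≤ 2` when `c = 4`, as witnessed by
the 5-cycle. -/
theorem stmt_15 :
    (∀ {V : Type} [Fintype V] (G : SimpleGraph V) (c : ℕ), (c = 3 ∨ c = 4) →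
        MadLT G 2 → HasOddColoring G c) ∧
      MadLE (SimpleGraph.cycleGraph 5) 2 ∧
        ¬ HasOddColoring (SimpleGraph.cycleGraph 5) 4 := by
  refine ⟨?_, madle_C5, no_odd_C5⟩
  intro V _ G c hc hmad
  exact main_lemma (Fintype.card V) V G c (by omega) le_rfl hmad
end

section
/- Let G be a vertex-minimal graph with no odd 4-coloring, mad(G) < 22/9, and no induced 5-cycle. Then G contains no path v1v2v3v4 of four consecutive vertices all of degree 2 (no 4-thread). -/
/-- `G` has no induced 5-cycle. -/
def NoInducedC5 {V : Type*} (G : SimpleGraph V) : Prop :=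
  ¬ ∃ f : Fin 5 → V, Function.Injective f ∧
      ∀ a b, G.Adj (f a) (f b) ↔ (SimpleGraph.cycleGraph 5).Adj a b

/-- `G` is a vertex-minimal counterexample: `G` has no odd 4-coloring, satisfies
`mad(G) < 22/9` and has no induced 5-cycle, while every graph on fewer vertices
satisfying the same sparsity hypotheses has an odd 4-coloring. -/
def MinimalCounterexample {V : Type} [Fintype V] (G : SimpleGraph V) : Prop :=
  ¬ HasOddColoring G 4 ∧ MadLT G (22 / 9) ∧ NoInducedC5 G ∧
    ∀ (W : Type) [Fintype W] (H : SimpleGraph W), Fintype.card W < Fintype.card V →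
      MadLT H (22 / 9) → NoInducedC5 H → HasOddColoring H 4

private lemma pair_eq_of_ncard_two {V : Type*} {t : Set V} {a b : V}
    (h : t.ncard = 2) (ha : a ∈ t) (hb : b ∈ t) (hab : a ≠ b) : t = {a, b} := by
  obtain ⟨x, y, hxy, rfl⟩ := Set.ncard_eq_two.mp h
  simp only [Set.mem_insert_iff, Set.mem_singleton_iff] at ha hb
  rcases ha with rfl | rfl <;> rcases hb with rfl | rfl <;> simp_all [Set.pair_comm]

private lemma exists_other {V : Type*} {t : Set V} {a : V}
    (h : t.ncard = 2) (ha : a ∈ t) : ∃ b, b ≠ a ∧ t = {a, b} := by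
  obtain ⟨x, y, hxy, rfl⟩ := Set.ncard_eq_two.mp h
  simp only [Set.mem_insert_iff, Set.mem_singleton_iff] at ha
  rcases ha with rfl | rfl
  · exact ⟨y, hxy.symm, rfl⟩
  · exact ⟨x, hxy, Set.pair_comm x a⟩

private lemma exists_forbidden (n : Fin 4 → ℕ) :
    ∃ f : Fin 4, ∀ c, c ≠ f → ∃ k, Odd (n k + if k = c then 1 else 0) := by
  by_cases h : ∃ k, Odd (n k)
  · obtain ⟨k0, hk0⟩ := h
    by_cases h2 : ∃ k, k ≠ k0 ∧ Odd (n k)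
    · obtain ⟨k1, hk1, hk1o⟩ := h2
      refine ⟨k0, fun c _ => ?_⟩
      rcases eq_or_ne c k0 with rfl | hck
      · exact ⟨k1, by simp only [if_neg hk1, add_zero]; exact hk1o⟩
      · exact ⟨k0, by simp only [if_neg (Ne.symm hck), add_zero]; exact hk0⟩
    · refine ⟨k0, fun c hc => ⟨k0, ?_⟩⟩
      simp only [if_neg (Ne.symm hc), add_zero]
      exact hk0
  · push_neg at h
    refine ⟨0, fun c _ => ⟨c, ?_⟩⟩
    simp only [if_pos rfl]
    exact Even.add_one (Nat.not_odd_iff_even.mp (h c))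

set_option synthInstance.maxSize 2000 in
set_option maxHeartbeats 1000000 in
private lemma choose_colors : ∀ pU fU pW fW : Fin 4, ∃ c1 c2 c3 c4 : Fin 4,
    c1 ≠ pU ∧ c1 ≠ fU ∧ c4 ≠ pW ∧ c4 ≠ fW ∧ c1 ≠ c2 ∧ c2 ≠ c3 ∧ c3 ≠ c4 ∧
    c1 ≠ c3 ∧ c2 ≠ c4 ∧ c2 ≠ pU ∧ c3 ≠ pW := by decide

private lemma inj5 {V : Type} {a b c d e : V} (h1 : a≠b) (h2 : a≠c) (h3 : a≠d) (h4 : a≠e)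
    (h5 : b≠c) (h6 : b≠d) (h7 : b≠e) (h8 : c≠d) (h9 : c≠e) (h10 : d≠e) :
    Function.Injective ![a,b,c,d,e] := by
  intro x y hxy
  fin_cases x <;> fin_cases y <;> simp_all

private lemma c5_map {V : Type} (G : SimpleGraph V) (a b c d e : V)
    (A1 : G.Adj a b) (A2 : G.Adj b c) (A3 : G.Adj c d) (A4 : G.Adj d e) (A5 : G.Adj e a)
    (N1 : ¬G.Adj a c) (N2 : ¬G.Adj a d) (N3 : ¬G.Adj b d) (N4 : ¬G.Adj b e) (N5 : ¬G.Adj c e) :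
    ∀ x y, G.Adj (![a,b,c,d,e] x) (![a,b,c,d,e] y) ↔ (SimpleGraph.cycleGraph 5).Adj x y := by
  intro x y
  fin_cases x <;> fin_cases y <;>
    simp only [Matrix.cons_val_zero, Matrix.cons_val_one, Matrix.head_cons,
      Matrix.cons_val_two, Matrix.tail_cons, Matrix.cons_val_three, Matrix.cons_val_four] <;>
    first
      | (refine iff_of_true ?_ (by decide);
         first | exact A1 | exact A2 | exact A3 | exact A4 | exact A5
               | exact A1.symm | exact A2.symm | exact A3.symm | exact A4.symm | exact A5.symm)
      | (refine iff_of_false ?_ (by decide);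
         first | exact N1 | exact N2 | exact N3 | exact N4 | exact N5
               | exact fun h => N1 h.symm | exact fun h => N2 h.symm | exact fun h => N3 h.symm
               | exact fun h => N4 h.symm | exact fun h => N5 h.symm
               | exact G.loopless.irrefl _)

private lemma transfer_odd {V : Type} (G : SimpleGraph V) (s : Set V)
    (φ' : s → Fin 4)
    (hodd : ∀ v : s, ((G.induce s).neighborSet v).Nonempty →
      ∃ k : Fin 4, Odd {u | (G.induce s).Adj v u ∧ φ' u = k}.ncard)
    (φ : V → Fin 4) {z : V} (hz : z ∈ s) (hnb : ∀ y, G.Adj z y → y ∈ s)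
    (hφ : ∀ y (h : y ∈ s), φ y = φ' ⟨y, h⟩)
    (hne : (G.neighborSet z).Nonempty) :
    ∃ k : Fin 4, Odd {y | G.Adj z y ∧ φ y = k}.ncard := by
  obtain ⟨y0, hy0⟩ := hne
  obtain ⟨k, hk⟩ := hodd ⟨z, hz⟩ ⟨⟨y0, hnb y0 hy0⟩, hy0⟩
  refine ⟨k, ?_⟩
  have himg : {y | G.Adj z y ∧ φ y = k} =
      Subtype.val '' {u : s | (G.induce s).Adj ⟨z, hz⟩ u ∧ φ' u = k} := by
    ext y
    constructor
    · rintro ⟨hadj, hcol⟩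
      exact ⟨⟨y, hnb y hadj⟩, ⟨hadj, by rw [← hφ y (hnb y hadj)]; exact hcol⟩, rfl⟩
    · rintro ⟨⟨y, hy⟩, ⟨hadj, hcol⟩, rfl⟩
      exact ⟨hadj, by rw [hφ y hy]; exact hcol⟩
  rw [himg, Set.ncard_image_of_injective _ Subtype.val_injective]
  exact hk

private lemma noC5_induce {V : Type} (G : SimpleGraph V) (h : NoInducedC5 G) (s : Set V) :
    NoInducedC5 (G.induce s) := by
  rintro ⟨f, hinj, hadj⟩
  exact h ⟨fun a => (f a).val, Subtype.val_injective.comp hinj, fun a b => hadj a b⟩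

private lemma madLT_induce {V : Type} [Fintype V] (G : SimpleGraph V) {r : ℚ}
    (h : MadLT G r) (s : Set V) : MadLT (G.induce s) r := by
  classical
  intro H' hne
  let H : G.Subgraph :=
    { verts := Subtype.val '' H'.verts
      Adj := fun a b => ∃ (ha : a ∈ s) (hb : b ∈ s), H'.Adj ⟨a, ha⟩ ⟨b, hb⟩
      adj_sub := by rintro a b ⟨ha, hb, hab⟩; exact H'.adj_sub hab
      edge_vert := by rintro a b ⟨ha, hb, hab⟩; exact ⟨⟨a, ha⟩, H'.edge_vert hab, rfl⟩
      symm := ⟨by rintro a b ⟨ha, hb, hab⟩; exact ⟨hb, ha, hab.symm⟩⟩ }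
  have hsub : Sym2.map Subtype.val '' H'.edgeSet ⊆ H.edgeSet := by
    rintro e ⟨e', he', rfl⟩
    induction e' using Sym2.ind with
    | _ x y => exact ⟨x.2, y.2, he'⟩
  have hcard : H'.edgeSet.ncard ≤ H.edgeSet.ncard := by
    rw [← Set.ncard_image_of_injective H'.edgeSet (Sym2.map.injective Subtype.val_injective)]
    exact Set.ncard_le_ncard hsub (Set.toFinite _)
  have hV : H.verts.ncard = H'.verts.ncard :=
    Set.ncard_image_of_injective _ Subtype.val_injective
  have hVne : H.verts.Nonempty := by
    obtain ⟨x, hx⟩ := hne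
    exact ⟨x.val, ⟨x, hx, rfl⟩⟩
  have h2 := h H hVne
  have hc : (H'.edgeSet.ncard : ℚ) ≤ (H.edgeSet.ncard : ℚ) := by exact_mod_cast hcard
  calc (2 * H'.edgeSet.ncard : ℚ) ≤ 2 * H.edgeSet.ncard := by linarith
    _ < r * H.verts.ncard := h2
    _ = r * H'.verts.ncard := by rw [hV]

/-- A vertex-minimal counterexample contains no 4-thread: no path `v₁v₂v₃v₄` of four
consecutive vertices all of degree 2. -/
theorem stmt_16 {V : Type} [Fintype V] (G : SimpleGraph V)
    (hG : MinimalCounterexample G) :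
    ¬ ∃ v₁ v₂ v₃ v₄ : V, G.Adj v₁ v₂ ∧ G.Adj v₂ v₃ ∧ G.Adj v₃ v₄ ∧
        v₁ ≠ v₃ ∧ v₁ ≠ v₄ ∧ v₂ ≠ v₄ ∧
        (G.neighborSet v₁).ncard = 2 ∧ (G.neighborSet v₂).ncard = 2 ∧
        (G.neighborSet v₃).ncard = 2 ∧ (G.neighborSet v₄).ncard = 2 := by
  classical
  rintro ⟨v₁, v₂, v₃, v₄, h12, h23, h34, h13, h14, h24, d1, d2, d3, d4⟩
  obtain ⟨hnocol, hmad, hC5, hmin⟩ := hG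
  have n12 : v₁ ≠ v₂ := h12.ne
  have n23 : v₂ ≠ v₃ := h23.ne
  have n34 : v₃ ≠ v₄ := h34.ne
  -- neighborhoods
  obtain ⟨u, hu2, hN1⟩ := exists_other d1 (by exact h12)
  have hN2 : G.neighborSet v₂ = {v₁, v₃} :=
    pair_eq_of_ncard_two d2 (by exact h12.symm) (by exact h23) h13
  have hN3 : G.neighborSet v₃ = {v₂, v₄} :=
    pair_eq_of_ncard_two d3 (by exact h23.symm) (by exact h34) h24
  obtain ⟨w, hw3, hN4⟩ := exists_other d4 (by exact h34.symm)
  have adj1u : G.Adj v₁ u := by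
    have : u ∈ G.neighborSet v₁ := by rw [hN1]; exact Set.mem_insert_iff.mpr (Or.inr rfl)
    exact this
  have adj4w : G.Adj v₄ w := by
    have : w ∈ G.neighborSet v₄ := by rw [hN4]; exact Set.mem_insert_iff.mpr (Or.inr rfl)
    exact this
  have mem1 : ∀ y, G.Adj v₁ y ↔ y = v₂ ∨ y = u := by
    intro y
    constructor
    · intro hy
      have : y ∈ G.neighborSet v₁ := hy
      rw [hN1] at this
      simpa using this
    · rintro (rfl | rfl)
      · exact h12
      · exact adj1u
  have mem2 : ∀ y, G.Adj v₂ y ↔ y = v₁ ∨ y = v₃ := by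
    intro y
    constructor
    · intro hy
      have : y ∈ G.neighborSet v₂ := hy
      rw [hN2] at this
      simpa using this
    · rintro (rfl | rfl)
      · exact h12.symm
      · exact h23
  have mem3 : ∀ y, G.Adj v₃ y ↔ y = v₂ ∨ y = v₄ := by
    intro y
    constructor
    · intro hy
      have : y ∈ G.neighborSet v₃ := hy
      rw [hN3] at this
      simpa using this
    · rintro (rfl | rfl)
      · exact h23.symm
      · exact h34
  have mem4 : ∀ y, G.Adj v₄ y ↔ y = v₃ ∨ y = w := by
    intro y
    constructor
    · intro hy
      have : y ∈ G.neighborSet v₄ := hy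
      rw [hN4] at this
      simpa using this
    · rintro (rfl | rfl)
      · exact h34.symm
      · exact adj4w
  have hu1 : u ≠ v₁ := fun h => G.loopless.irrefl v₁ (h ▸ adj1u)
  have hu3 : u ≠ v₃ := by
    intro h
    have hx : G.Adj v₃ v₁ := (h ▸ adj1u).symm
    rcases (mem3 v₁).mp hx with e | e
    · exact n12 e
    · exact h14 e
  have hw4 : w ≠ v₄ := fun h => G.loopless.irrefl v₄ (h ▸ adj4w)
  have hw2 : w ≠ v₂ := by
    intro h
    have hx : G.Adj v₂ v₄ := (h ▸ adj4w).symm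
    rcases (mem2 v₄).mp hx with e | e
    · exact h14 e.symm
    · exact n34 e.symm
  -- the deleted set
  set s : Set V := {x | x ≠ v₁ ∧ x ≠ v₂ ∧ x ≠ v₃ ∧ x ≠ v₄} with hs
  have hmem : ∀ x, x ∈ s ↔ (x ≠ v₁ ∧ x ≠ v₂ ∧ x ≠ v₃ ∧ x ≠ v₄) := by
    intro x; rw [hs]; rfl
  have hcard : Fintype.card ↥s < Fintype.card V :=
    Fintype.card_subtype_lt (p := fun x => x ∈ s) (x := v₁)
      (fun h => ((hmem v₁).mp h).1 rfl)
  obtain ⟨φ', hp', ho'⟩ :=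
    hmin ↥s (G.induce s) hcard (madLT_induce G hmad s) (noC5_induce G hC5 s)
  set ψ : V → Fin 4 := fun x => if h : x ∈ s then φ' ⟨x, h⟩ else 0 with hψdef
  have hψ : ∀ y (h : y ∈ s), ψ y = φ' ⟨y, h⟩ := fun y h => dif_pos h
  by_cases hA : u = v₄
  · -- Case A : the four vertices form a 4-cycle component
    have hwv1 : w = v₁ := by
      have hv14 : G.Adj v₄ v₁ := (hA ▸ adj1u).symm
      rcases (mem4 v₁).mp hv14 with h | h
      · exact absurd h h13
      · exact h.symm
    set φ : V → Fin 4 := fun x => if x = v₁ then 0 else if x = v₂ then 1 else if x = v₃ then 2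
      else if x = v₄ then 3 else ψ x with hφdef
    have hφ1 : φ v₁ = 0 := by simp only [hφdef]; exact if_pos trivial
    have hφ2 : φ v₂ = 1 := by simp only [hφdef]; rw [if_neg (Ne.symm n12)]; exact if_pos trivial
    have hφ3 : φ v₃ = 2 := by
      simp only [hφdef]; rw [if_neg (Ne.symm h13), if_neg (Ne.symm n23)]; exact if_pos trivial
    have hφ4 : φ v₄ = 3 := by
      simp only [hφdef]
      rw [if_neg (Ne.symm h14), if_neg (Ne.symm h24), if_neg (Ne.symm n34)]; exact if_pos trivial
    have hφs : ∀ y (h : y ∈ s), φ y = φ' ⟨y, h⟩ := by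
      intro y h
      obtain ⟨e1, e2, e3, e4⟩ := (hmem y).mp h
      simp only [hφdef]
      rw [if_neg e1, if_neg e2, if_neg e3, if_neg e4]
      exact hψ y h
    have hznb : ∀ z, z ∈ s → ∀ y, G.Adj z y → y ∈ s := by
      intro z hzs y hy
      obtain ⟨e1, e2, e3, e4⟩ := (hmem z).mp hzs
      refine (hmem y).mpr ⟨?_, ?_, ?_, ?_⟩
      · rintro rfl
        rcases (mem1 z).mp hy.symm with h | h
        · exact e2 h
        · exact e4 (h.trans hA)
      · rintro rfl
        rcases (mem2 z).mp hy.symm with h | h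
        · exact e1 h
        · exact e3 h
      · rintro rfl
        rcases (mem3 z).mp hy.symm with h | h
        · exact e2 h
        · exact e4 h
      · rintro rfl
        rcases (mem4 z).mp hy.symm with h | h
        · exact e3 h
        · exact e1 (h.trans hwv1)
    refine hnocol ⟨φ, ?_, ?_⟩
    · -- properness
      have key : ∀ a b, G.Adj a b → ¬ a ∈ s → φ a ≠ φ b := by
        intro a b hab ha
        have ha' : a = v₁ ∨ a = v₂ ∨ a = v₃ ∨ a = v₄ := by
          by_contra hcon
          push_neg at hcon
          exact ha ((hmem a).mpr ⟨hcon.1, hcon.2.1, hcon.2.2.1, hcon.2.2.2⟩)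
        rcases ha' with rfl | rfl | rfl | rfl
        · rcases (mem1 b).mp hab with rfl | rfl
          · rw [hφ1, hφ2]; decide
          · rw [hφ1, hA, hφ4]; decide
        · rcases (mem2 b).mp hab with rfl | rfl
          · rw [hφ2, hφ1]; decide
          · rw [hφ2, hφ3]; decide
        · rcases (mem3 b).mp hab with rfl | rfl
          · rw [hφ3, hφ2]; decide
          · rw [hφ3, hφ4]; decide
        · rcases (mem4 b).mp hab with rfl | rfl
          · rw [hφ4, hφ3]; decide
          · rw [hφ4, hwv1, hφ1]; decide
      intro a b hab
      by_cases ha : a ∈ s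
      · by_cases hb : b ∈ s
        · rw [hφs a ha, hφs b hb]
          exact hp' (show (G.induce s).Adj ⟨a, ha⟩ ⟨b, hb⟩ from hab)
        · exact Ne.symm (key b a hab.symm hb)
      · exact key a b hab ha
    · -- oddness
      intro z hzne
      by_cases hz1 : z = v₁
      · subst hz1
        refine ⟨1, ?_⟩
        have hset : {y | G.Adj z y ∧ φ y = 1} = {v₂} := by
          ext y
          simp only [Set.mem_setOf_eq, Set.mem_singleton_iff]
          constructor
          · rintro ⟨hadj, hcol⟩
            rcases (mem1 y).mp hadj with rfl | rfl
            · rfl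
            · rw [hA, hφ4] at hcol; exact absurd hcol (by decide)
          · rintro rfl; exact ⟨h12, hφ2⟩
        rw [hset, Set.ncard_singleton]
        exact odd_one
      by_cases hz2 : z = v₂
      · subst hz2
        refine ⟨0, ?_⟩
        have hset : {y | G.Adj z y ∧ φ y = 0} = {v₁} := by
          ext y
          simp only [Set.mem_setOf_eq, Set.mem_singleton_iff]
          constructor
          · rintro ⟨hadj, hcol⟩
            rcases (mem2 y).mp hadj with rfl | rfl
            · rfl
            · rw [hφ3] at hcol; exact absurd hcol (by decide)
          · rintro rfl; exact ⟨h12.symm, hφ1⟩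
        rw [hset, Set.ncard_singleton]
        exact odd_one
      by_cases hz3 : z = v₃
      · subst hz3
        refine ⟨1, ?_⟩
        have hset : {y | G.Adj z y ∧ φ y = 1} = {v₂} := by
          ext y
          simp only [Set.mem_setOf_eq, Set.mem_singleton_iff]
          constructor
          · rintro ⟨hadj, hcol⟩
            rcases (mem3 y).mp hadj with rfl | rfl
            · rfl
            · rw [hφ4] at hcol; exact absurd hcol (by decide)
          · rintro rfl; exact ⟨h23.symm, hφ2⟩
        rw [hset, Set.ncard_singleton]
        exact odd_one
      by_cases hz4 : z = v₄
      · subst hz4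
        refine ⟨2, ?_⟩
        have hset : {y | G.Adj z y ∧ φ y = 2} = {v₃} := by
          ext y
          simp only [Set.mem_setOf_eq, Set.mem_singleton_iff]
          constructor
          · rintro ⟨hadj, hcol⟩
            rcases (mem4 y).mp hadj with rfl | rfl
            · rfl
            · rw [hwv1, hφ1] at hcol; exact absurd hcol (by decide)
          · rintro rfl; exact ⟨h34.symm, hφ3⟩
        rw [hset, Set.ncard_singleton]
        exact odd_one
      have hzs : z ∈ s := (hmem z).mpr ⟨hz1, hz2, hz3, hz4⟩
      exact transfer_odd G s φ' ho' φ hzs (hznb z hzs) hφs hzne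
  · by_cases hB : u = w
    · -- Case B : induced 5-cycle, contradiction
      have N1 : ¬G.Adj u v₂ := fun h => ((mem2 u).mp h.symm).elim hu1 hu3
      have N2 : ¬G.Adj u v₃ := fun h => ((mem3 u).mp h.symm).elim hu2 hA
      have N3 : ¬G.Adj v₁ v₃ :=
        fun h => ((mem1 v₃).mp h).elim (fun e => n23 e.symm) (fun e => hu3 e.symm)
      have N4 : ¬G.Adj v₁ v₄ :=
        fun h => ((mem1 v₄).mp h).elim (fun e => h24 e.symm) (fun e => hA e.symm)
      have N5 : ¬G.Adj v₂ v₄ :=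
        fun h => ((mem2 v₄).mp h).elim (fun e => h14 e.symm) (fun e => n34 e.symm)
      have A5 : G.Adj v₄ u := by rw [hB]; exact adj4w
      exact hC5 ⟨![u, v₁, v₂, v₃, v₄],
        inj5 hu1 hu2 hu3 hA n12 h13 h14 n23 h24 n34,
        c5_map G u v₁ v₂ v₃ v₄ adj1u.symm h12 h23 h34 A5 N1 N2 N3 N4 N5⟩
    · -- Case C : main case
      have hwv1 : w ≠ v₁ := by
        intro h
        have hx : G.Adj v₁ v₄ := (h ▸ adj4w).symm
        rcases (mem1 v₄).mp hx with e | e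
        · exact h24 e.symm
        · exact hA e.symm
      have hus : u ∈ s := (hmem u).mpr ⟨hu1, hu2, hu3, hA⟩
      have hws : w ∈ s := (hmem w).mpr ⟨hwv1, hw2, hw3, hw4⟩
      have hunb : ∀ y, G.Adj u y → y = v₁ ∨ y ∈ s := by
        intro y hy
        by_cases e1 : y = v₁
        · exact Or.inl e1
        refine Or.inr ((hmem y).mpr ⟨e1, ?_, ?_, ?_⟩)
        · rintro rfl
          rcases (mem2 u).mp hy.symm with h | h
          · exact hu1 h
          · exact hu3 h
        · rintro rfl
          rcases (mem3 u).mp hy.symm with h | h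
          · exact hu2 h
          · exact hA h
        · rintro rfl
          rcases (mem4 u).mp hy.symm with h | h
          · exact hu3 h
          · exact hB h
      have hwnb : ∀ y, G.Adj w y → y = v₄ ∨ y ∈ s := by
        intro y hy
        by_cases e4 : y = v₄
        · exact Or.inl e4
        refine Or.inr ((hmem y).mpr ⟨?_, ?_, ?_, e4⟩)
        · rintro rfl
          rcases (mem1 w).mp hy.symm with h | h
          · exact hw2 h
          · exact hB h.symm
        · rintro rfl
          rcases (mem2 w).mp hy.symm with h | h
          · exact hwv1 h
          · exact hw3 h
        · rintro rfl
          rcases (mem3 w).mp hy.symm with h | h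
          · exact hw2 h
          · exact hw4 h
      have hznb : ∀ z, z ∈ s → z ≠ u → z ≠ w → ∀ y, G.Adj z y → y ∈ s := by
        intro z hzs hzu hzw y hy
        obtain ⟨e1, e2, e3, e4⟩ := (hmem z).mp hzs
        refine (hmem y).mpr ⟨?_, ?_, ?_, ?_⟩
        · rintro rfl
          rcases (mem1 z).mp hy.symm with h | h
          · exact e2 h
          · exact hzu h
        · rintro rfl
          rcases (mem2 z).mp hy.symm with h | h
          · exact e1 h
          · exact e3 h
        · rintro rfl
          rcases (mem3 z).mp hy.symm with h | h
          · exact e2 h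
          · exact e4 h
        · rintro rfl
          rcases (mem4 z).mp hy.symm with h | h
          · exact e3 h
          · exact hzw h
      obtain ⟨fU, hfU⟩ :=
        exists_forbidden (fun k => {y | G.Adj u y ∧ y ∈ s ∧ ψ y = k}.ncard)
      obtain ⟨fW, hfW⟩ :=
        exists_forbidden (fun k => {y | G.Adj w y ∧ y ∈ s ∧ ψ y = k}.ncard)
      obtain ⟨c1, c2, c3, c4, g1, g2, g3, g4, g5, g6, g7, g8, g9, g10, g11⟩ :=
        choose_colors (ψ u) fU (ψ w) fW
      set φ : V → Fin 4 := fun x => if x = v₁ then c1 else if x = v₂ then c2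
        else if x = v₃ then c3 else if x = v₄ then c4 else ψ x with hφdef
      have hφ1 : φ v₁ = c1 := by simp only [hφdef]; exact if_pos trivial
      have hφ2 : φ v₂ = c2 := by simp only [hφdef]; rw [if_neg (Ne.symm n12)]; exact if_pos trivial
      have hφ3 : φ v₃ = c3 := by
        simp only [hφdef]; rw [if_neg (Ne.symm h13), if_neg (Ne.symm n23)]; exact if_pos trivial
      have hφ4 : φ v₄ = c4 := by
        simp only [hφdef]
        rw [if_neg (Ne.symm h14), if_neg (Ne.symm h24), if_neg (Ne.symm n34)]; exact if_pos trivial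
      have hφψ : ∀ y, y ∈ s → φ y = ψ y := by
        intro y h
        obtain ⟨e1, e2, e3, e4⟩ := (hmem y).mp h
        simp only [hφdef]
        rw [if_neg e1, if_neg e2, if_neg e3, if_neg e4]
      have hφs : ∀ y (h : y ∈ s), φ y = φ' ⟨y, h⟩ := by
        intro y h
        rw [hφψ y h]
        exact hψ y h
      have hφu : φ u = ψ u := hφψ u hus
      have hφw : φ w = ψ w := hφψ w hws
      refine hnocol ⟨φ, ?_, ?_⟩
      · -- properness
        have key : ∀ a b, G.Adj a b → ¬ a ∈ s → φ a ≠ φ b := by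
          intro a b hab ha
          have ha' : a = v₁ ∨ a = v₂ ∨ a = v₃ ∨ a = v₄ := by
            by_contra hcon
            push_neg at hcon
            exact ha ((hmem a).mpr ⟨hcon.1, hcon.2.1, hcon.2.2.1, hcon.2.2.2⟩)
          rcases ha' with rfl | rfl | rfl | rfl
          · rcases (mem1 b).mp hab with rfl | rfl
            · rw [hφ1, hφ2]; exact g5
            · rw [hφ1, hφu]; exact g1
          · rcases (mem2 b).mp hab with rfl | rfl
            · rw [hφ2, hφ1]; exact Ne.symm g5
            · rw [hφ2, hφ3]; exact g6
          · rcases (mem3 b).mp hab with rfl | rfl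
            · rw [hφ3, hφ2]; exact Ne.symm g6
            · rw [hφ3, hφ4]; exact g7
          · rcases (mem4 b).mp hab with rfl | rfl
            · rw [hφ4, hφ3]; exact Ne.symm g7
            · rw [hφ4, hφw]; exact g3
        intro a b hab
        by_cases ha : a ∈ s
        · by_cases hb : b ∈ s
          · rw [hφs a ha, hφs b hb]
            exact hp' (show (G.induce s).Adj ⟨a, ha⟩ ⟨b, hb⟩ from hab)
          · exact Ne.symm (key b a hab.symm hb)
        · exact key a b hab ha
      · -- oddness
        intro z hzne
        by_cases hz1 : z = v₁
        · subst hz1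
          refine ⟨c2, ?_⟩
          have hset : {y | G.Adj z y ∧ φ y = c2} = {v₂} := by
            ext y
            simp only [Set.mem_setOf_eq, Set.mem_singleton_iff]
            constructor
            · rintro ⟨hadj, hcol⟩
              rcases (mem1 y).mp hadj with rfl | rfl
              · rfl
              · rw [hφu] at hcol; exact absurd hcol.symm g10
            · rintro rfl; exact ⟨h12, hφ2⟩
          rw [hset, Set.ncard_singleton]
          exact odd_one
        by_cases hz2 : z = v₂
        · subst hz2
          refine ⟨c1, ?_⟩
          have hset : {y | G.Adj z y ∧ φ y = c1} = {v₁} := by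
            ext y
            simp only [Set.mem_setOf_eq, Set.mem_singleton_iff]
            constructor
            · rintro ⟨hadj, hcol⟩
              rcases (mem2 y).mp hadj with rfl | rfl
              · rfl
              · rw [hφ3] at hcol; exact absurd hcol.symm g8
            · rintro rfl; exact ⟨h12.symm, hφ1⟩
          rw [hset, Set.ncard_singleton]
          exact odd_one
        by_cases hz3 : z = v₃
        · subst hz3
          refine ⟨c2, ?_⟩
          have hset : {y | G.Adj z y ∧ φ y = c2} = {v₂} := by
            ext y
            simp only [Set.mem_setOf_eq, Set.mem_singleton_iff]
            constructor
            · rintro ⟨hadj, hcol⟩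
              rcases (mem3 y).mp hadj with rfl | rfl
              · rfl
              · rw [hφ4] at hcol; exact absurd hcol.symm g9
            · rintro rfl; exact ⟨h23.symm, hφ2⟩
          rw [hset, Set.ncard_singleton]
          exact odd_one
        by_cases hz4 : z = v₄
        · subst hz4
          refine ⟨c3, ?_⟩
          have hset : {y | G.Adj z y ∧ φ y = c3} = {v₃} := by
            ext y
            simp only [Set.mem_setOf_eq, Set.mem_singleton_iff]
            constructor
            · rintro ⟨hadj, hcol⟩
              rcases (mem4 y).mp hadj with rfl | rfl
              · rfl
              · rw [hφw] at hcol; exact absurd hcol.symm g11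
            · rintro rfl; exact ⟨h34.symm, hφ3⟩
          rw [hset, Set.ncard_singleton]
          exact odd_one
        by_cases hzu : z = u
        · subst hzu
          obtain ⟨k, hk⟩ := hfU c1 g2
          refine ⟨k, ?_⟩
          by_cases hkc : k = c1
          · rw [if_pos hkc] at hk
            have hset : {y | G.Adj z y ∧ φ y = k}
                = insert v₁ {y | G.Adj z y ∧ y ∈ s ∧ ψ y = k} := by
              ext y
              simp only [Set.mem_setOf_eq, Set.mem_insert_iff]
              constructor
              · rintro ⟨hadj, hcol⟩
                rcases hunb y hadj with rfl | hys
                · exact Or.inl rfl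
                · exact Or.inr ⟨hadj, hys, by rw [← hφψ y hys]; exact hcol⟩
              · rintro (rfl | ⟨hadj, hys, hcol⟩)
                · exact ⟨adj1u.symm, by rw [hφ1, hkc]⟩
                · exact ⟨hadj, by rw [hφψ y hys]; exact hcol⟩
            rw [hset, Set.ncard_insert_of_notMem
              (fun hmem' => ((hmem v₁).mp hmem'.2.1).1 rfl) (Set.toFinite _)]
            exact hk
          · rw [if_neg hkc, add_zero] at hk
            have hset : {y | G.Adj z y ∧ φ y = k}
                = {y | G.Adj z y ∧ y ∈ s ∧ ψ y = k} := by
              ext y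
              simp only [Set.mem_setOf_eq]
              constructor
              · rintro ⟨hadj, hcol⟩
                rcases hunb y hadj with rfl | hys
                · rw [hφ1] at hcol; exact absurd hcol.symm hkc
                · exact ⟨hadj, hys, by rw [← hφψ y hys]; exact hcol⟩
              · rintro ⟨hadj, hys, hcol⟩
                exact ⟨hadj, by rw [hφψ y hys]; exact hcol⟩
            rw [hset]
            exact hk
        by_cases hzw : z = w
        · subst hzw
          obtain ⟨k, hk⟩ := hfW c4 g4
          refine ⟨k, ?_⟩
          by_cases hkc : k = c4
          · rw [if_pos hkc] at hk
            have hset : {y | G.Adj z y ∧ φ y = k}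
                = insert v₄ {y | G.Adj z y ∧ y ∈ s ∧ ψ y = k} := by
              ext y
              simp only [Set.mem_setOf_eq, Set.mem_insert_iff]
              constructor
              · rintro ⟨hadj, hcol⟩
                rcases hwnb y hadj with rfl | hys
                · exact Or.inl rfl
                · exact Or.inr ⟨hadj, hys, by rw [← hφψ y hys]; exact hcol⟩
              · rintro (rfl | ⟨hadj, hys, hcol⟩)
                · exact ⟨adj4w.symm, by rw [hφ4, hkc]⟩
                · exact ⟨hadj, by rw [hφψ y hys]; exact hcol⟩
            rw [hset, Set.ncard_insert_of_notMem
              (fun hmem' => ((hmem v₄).mp hmem'.2.1).2.2.2 rfl) (Set.toFinite _)]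
            exact hk
          · rw [if_neg hkc, add_zero] at hk
            have hset : {y | G.Adj z y ∧ φ y = k}
                = {y | G.Adj z y ∧ y ∈ s ∧ ψ y = k} := by
              ext y
              simp only [Set.mem_setOf_eq]
              constructor
              · rintro ⟨hadj, hcol⟩
                rcases hwnb y hadj with rfl | hys
                · rw [hφ4] at hcol; exact absurd hcol.symm hkc
                · exact ⟨hadj, hys, by rw [← hφψ y hys]; exact hcol⟩
              · rintro ⟨hadj, hys, hcol⟩
                exact ⟨hadj, by rw [hφψ y hys]; exact hcol⟩
            rw [hset]
            exact hk
        have hzs : z ∈ s := (hmem z).mpr ⟨hz1, hz2, hz3, hz4⟩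
        exact transfer_odd G s φ' ho' φ hzs (hznb z hzs hzu hzw) hφs hzne
end
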